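/- arXiv:1405.2480 — 9 statements merged into one kernel-verified Lean document; each statement's English description precedes it below -/
import Mathlib

section
/- If X is a finite set of integer points in Z^n with |X| ≥ 2^n + 1 such that every point of X is a vertex of the convex hull of X, then there exists an integer point z in conv(X) that is not in X. -/
/-- Coordinatewise cast of an integer point to `ℝⁿ`. -/
def icast {n : ℕ} (v : Fin n → ℤ) : Fin n → ℝ := fun i => (v i : ℝ)

/-- The support hyperplane property: every point of `X` is exposed
(equivalently, a vertex of the convex hull of `X`). -/
def SHP {n : ℕ} (X : Finset (Fin n → ℤ)) : Prop :=
  ∀ y ∈ X, ∃ (f : Fin n → ℝ) (g : ℝ),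
    (∑ i, f i * (y i : ℝ)) = g ∧ ∀ x ∈ X, x ≠ y → (∑ i, f i * (x i : ℝ)) < g

theorem stmt_0 {n : ℕ} (hn : 1 ≤ n) (X : Finset (Fin n → ℤ))
    (hshp : SHP X) (hcard : 2 ^ n + 1 ≤ X.card) :
    ∃ z : Fin n → ℤ, icast z ∈ convexHull ℝ (icast '' (X : Set (Fin n → ℤ))) ∧ z ∉ X := by
  -- pigeonhole on parity vectors
  have hmaps : ∀ a ∈ X, (fun v : Fin n → ℤ => fun i => ((v i : ZMod 2))) a ∈
      (Finset.univ : Finset (Fin n → ZMod 2)) := fun a _ => Finset.mem_univ _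
  have hlt : (Finset.univ : Finset (Fin n → ZMod 2)).card < X.card := by
    simp only [Finset.card_univ, Fintype.card_fun, ZMod.card, Fintype.card_fin]
    omega
  obtain ⟨x, hx, y, hy, hxy, hpar⟩ :=
    Finset.exists_ne_map_eq_of_card_lt_of_maps_to hlt hmaps
  -- each coordinate sum is even
  have heven : ∀ i, x i + y i = 2 * ((x i + y i) / 2) := by
    intro i
    have h2 : ((x i + y i : ℤ) : ZMod 2) = 0 := by
      have := congrFun hpar i
      push_cast
      rw [this]
      exact CharTwo.add_self_eq_zero _
    have hdvd : (2 : ℤ) ∣ x i + y i := by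
      rwa [ZMod.intCast_zmod_eq_zero_iff_dvd] at h2
    omega
  set z : Fin n → ℤ := fun i => (x i + y i) / 2 with hz
  have hzr : icast z = (1/2 : ℝ) • icast x + (1/2 : ℝ) • icast y := by
    funext i
    simp only [icast, Pi.add_apply, Pi.smul_apply, smul_eq_mul]
    have := heven i
    have : ((x i : ℝ) + y i) = 2 * (z i : ℝ) := by
      exact_mod_cast congrArg (fun t : ℤ => (t : ℝ)) this
    linarith
  refine ⟨z, ?_, ?_⟩
  · rw [hzr]
    have hc : Convex ℝ (convexHull ℝ (icast '' (X : Set (Fin n → ℤ)))) :=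
      convex_convexHull ℝ _
    exact hc (subset_convexHull ℝ _ ⟨x, hx, rfl⟩) (subset_convexHull ℝ _ ⟨y, hy, rfl⟩)
      (by norm_num) (by norm_num) (by norm_num)
  · intro hzX
    obtain ⟨f, g, hfg, hlt'⟩ := hshp z hzX
    have hxz : x ≠ z := by
      intro h
      apply hxy
      funext i
      have := heven i
      have hxi := congrFun h i
      simp only [hz] at hxi
      omega
    have hyz : y ≠ z := by
      intro h
      apply hxy
      funext i
      have := heven i
      have hyi := congrFun h i
      simp only [hz] at hyi
      omega
    have h1 := hlt' x hx hxz
    have h2 := hlt' y hy hyz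
    have hsum : (∑ i, f i * (z i : ℝ)) =
        ((∑ i, f i * (x i : ℝ)) + (∑ i, f i * (y i : ℝ))) / 2 := by
      rw [← Finset.sum_add_distrib]
      rw [Finset.sum_div]
      refine Finset.sum_congr rfl fun i _ => ?_
      have := heven i
      have h2' : ((x i : ℝ) + y i) = 2 * (z i : ℝ) := by
        exact_mod_cast congrArg (fun t : ℤ => (t : ℝ)) this
      linear_combination (-(f i) / 2) * h2'
    rw [hsum] at hfg
    linarith
end

section
/- Let X ⊂ Z^n be a finite set satisfying the support hyperplane property, and let z ∈ conv(X) ∩ Z^n with z ∉ X. Then there exist disjoint subsets X₁, X₂ ⊆ X with X₁ ∪ X₂ = X such that both X₁ ∪ {z} and X₂ ∪ {z} satisfy the support hyperplane property. -/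
section StrictSupport

variable {𝕜 E : Type*} [Field 𝕜] [LinearOrder 𝕜] [IsStrictOrderedRing 𝕜] [AddCommGroup E]
  [Module 𝕜 E]

theorem convex_insert_setOf_lt (l : E →ₗ[𝕜] 𝕜) (y : E) :
    Convex 𝕜 (insert y {p | l p < l y}) := by
  have hle : ∀ q ∈ insert y {p | l p < l y}, l q ≤ l y := by
    rintro q (rfl | hq)
    exacts [le_rfl, le_of_lt hq]
  refine convex_iff_openSegment_subset.mpr fun a ha b hb => ?_
  rintro _ ⟨s, t, hs, ht, hst, rfl⟩
  by_cases hab : a = y ∧ b = y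
  · obtain ⟨rfl, rfl⟩ := hab
    exact Or.inl (Convex.combo_self hst _)
  refine Or.inr ?_
  have hstrict : l a < l y ∨ l b < l y := by
    rcases not_and_or.mp hab with h | h
    · exact .inl (ha.resolve_left h)
    · exact .inr (hb.resolve_left h)
  have hla := mul_le_mul_of_nonneg_left (hle a ha) hs.le
  have hlb := mul_le_mul_of_nonneg_left (hle b hb) ht.le
  show l (s • a + t • b) < l y
  rw [map_add, map_smul, map_smul, smul_eq_mul, smul_eq_mul]
  calc s * l a + t * l b < s * l y + t * l y := by
        rcases hstrict with h | h
        · linarith [mul_lt_mul_of_pos_left h hs]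
        · linarith [mul_lt_mul_of_pos_left h ht]
    _ = l y := by rw [← add_mul, hst, one_mul]

theorem lt_of_mem_convexHull_of_forall_lt {l : E →ₗ[𝕜] 𝕜} {s : Set E} {y z : E}
    (hs : ∀ x ∈ s, x ≠ y → l x < l y) (hz : z ∈ convexHull 𝕜 s) (hzy : z ≠ y) :
    l z < l y := by
  have hsub : s ⊆ insert y {p | l p < l y} := fun x hx =>
    (eq_or_ne x y).imp id (hs x hx)
  exact (convexHull_min hsub (convex_insert_setOf_lt l y) hz).resolve_left hzy

end StrictSupport

lemma icast_injective {n : ℕ} : Function.Injective (icast (n := n)) := fun _ _ h =>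
  funext fun i => Int.cast_injective (α := ℝ) (congrFun h i)

theorem SHP_iff_exists_dual {n : ℕ} (X : Finset (Fin n → ℤ)) :
    SHP X ↔ ∀ y ∈ X, ∃ l : Module.Dual ℝ (Fin n → ℝ),
      ∀ x ∈ X, x ≠ y → l (icast x) < l (icast y) := by
  refine forall₂_congr fun y _ => ⟨?_, ?_⟩
  · rintro ⟨f, g, rfl, hf⟩
    exact ⟨dotProductEquiv ℝ (Fin n) f, hf⟩
  · rintro ⟨l, hl⟩
    obtain ⟨f, rfl⟩ := (dotProductEquiv ℝ (Fin n)).surjective l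
    exact ⟨f, _, rfl, hl⟩

theorem SHP_union_singleton {n : ℕ} {X Y : Finset (Fin n → ℤ)} (hX : SHP X) (hYX : Y ⊆ X)
    {z : Fin n → ℤ} (hz : icast z ∈ convexHull ℝ (icast '' (X : Set (Fin n → ℤ))))
    (hzX : z ∉ X) (l : Module.Dual ℝ (Fin n → ℝ)) (hl : ∀ y ∈ Y, l (icast y) < l (icast z)) :
    SHP (Y ∪ {z}) := by
  rw [SHP_iff_exists_dual] at hX ⊢
  intro y hy
  rcases Finset.mem_union.mp hy with hyY | hyz
  · obtain ⟨ly, hly⟩ := hX y (hYX hyY)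
    refine ⟨ly, fun x hx hxy => ?_⟩
    rcases Finset.mem_union.mp hx with hxY | hxz
    · exact hly x (hYX hxY) hxy
    · rw [Finset.mem_singleton.mp hxz]
      refine lt_of_mem_convexHull_of_forall_lt ?_ hz ?_
      · rintro _ ⟨x', hx', rfl⟩ hx'y
        exact hly x' hx' (mt (congrArg icast) hx'y)
      · exact icast_injective.ne (ne_of_mem_of_not_mem (hYX hyY) hzX).symm
  · rw [Finset.mem_singleton.mp hyz]
    refine ⟨l, fun x hx hxz => ?_⟩
    rcases Finset.mem_union.mp hx with hxY | hxz'
    · exact hl x hxY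
    · exact absurd (Finset.mem_singleton.mp hxz') hxz

theorem stmt_2 {n : ℕ} (X : Finset (Fin n → ℤ)) (hshp : SHP X)
    (z : Fin n → ℤ) (hz : icast z ∈ convexHull ℝ (icast '' (X : Set (Fin n → ℤ))))
    (hzX : z ∉ X) :
    ∃ X₁ X₂ : Finset (Fin n → ℤ), X₁ ⊆ X ∧ X₂ ⊆ X ∧ Disjoint X₁ X₂ ∧ X₁ ∪ X₂ = X ∧
      SHP (X₁ ∪ {z}) ∧ SHP (X₂ ∪ {z}) := by
  obtain ⟨l, hl⟩ := Module.exists_dual_forall_apply_ne_zero (K := ℝ)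
    (fun x : X => icast x - icast z) fun x => sub_ne_zero.mpr <|
      icast_injective.ne (ne_of_mem_of_not_mem x.2 hzX)
  have hne : ∀ x ∈ X, l (icast x) ≠ l (icast z) := fun x hx h =>
    hl ⟨x, hx⟩ (by rw [map_sub, h, sub_self])
  refine ⟨X.filter (fun x => l (icast x) < l (icast z)),
    X.filter (fun x => ¬ l (icast x) < l (icast z)), Finset.filter_subset _ _,
    Finset.filter_subset _ _, Finset.disjoint_filter_filter_not _ _ _,
    Finset.filter_union_filter_not_eq _ _, ?_, ?_⟩
  · exact SHP_union_singleton hshp (Finset.filter_subset _ _) hz hzX l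
      fun x hx => (Finset.mem_filter.mp hx).2
  · refine SHP_union_singleton hshp (Finset.filter_subset _ _) hz hzX (-l) fun x hx => ?_
    obtain ⟨hxX, hxz⟩ := Finset.mem_filter.mp hx
    simpa using lt_of_le_of_ne (not_lt.mp hxz) (hne x hxX).symm
end

section
/- Let n ≥ 2 and k ≥ 1 be natural numbers. If P is a convex lattice polytope in R^n whose vertex set X ⊂ Z^n has cardinality |X| ≥ k·2^n − 2k + 3, then P contains at least ⌊3k/2⌋ lattice points not in X. -/
namespace Stmt6

def md {n : ℕ} (x y : Fin n → ℤ) : Fin n → ℤ := fun i => (x i + y i) / 2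

lemma icast_inj {n : ℕ} : Function.Injective (icast (n := n)) := by
  intro x y h
  funext i
  have := congrFun h i
  simp only [icast] at this
  exact_mod_cast this

/-- integer midpoint -/

lemma md_spec {n : ℕ} {x y : Fin n → ℤ} (h : ∀ i, ((x i : ZMod 2) = (y i : ZMod 2))) :
    ∀ i, 2 * md x y i = x i + y i := by
  intro i
  have h2 : x i ≡ y i [ZMOD (2:ℕ)] := (ZMod.intCast_eq_intCast_iff _ _ _).1 (h i)
  have h3 : x i % 2 = y i % 2 := h2
  simp only [md]
  omega


lemma digit_zero : ∀ (m : ℕ) (bb : ℤ) (g : ℕ → ℤ), 0 < bb → (∀ i, |g i| < bb) →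
    (∑ i ∈ Finset.range m, g i * bb ^ i) = 0 → ∀ i < m, g i = 0 := by
  intro m
  induction m with
  | zero => intro bb g _ _ _ i hi; omega
  | succ m ih =>
    intro bb g hbb hg hsum i hi
    rw [Finset.sum_range_succ'] at hsum
    have hfac : ∀ j ∈ Finset.range m, g (j+1) * bb ^ (j+1) = bb * (g (j+1) * bb ^ j) := by
      intro j _; ring
    rw [Finset.sum_congr rfl hfac, ← Finset.mul_sum] at hsum
    set T := ∑ j ∈ Finset.range m, g (j+1) * bb ^ j with hT
    have hg0 : g 0 = -(bb * T) := by linarith [hsum]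
    have habs : |g 0| = bb * |T| := by rw [hg0, abs_neg, abs_mul, abs_of_pos hbb]
    have hT0 : T = 0 := by
      have : bb * |T| < bb := habs ▸ hg (0 : ℕ)
      have h1 : |T| < 1 := by
        by_contra hc
        push_neg at hc
        nlinarith
      rw [abs_lt] at h1; omega
    have hg00 : g 0 = 0 := by rw [hg0, hT0]; ring
    rcases Nat.eq_zero_or_pos i with h0 | hpos
    · rw [h0]; exact hg00
    · obtain ⟨j, rfl⟩ : ∃ j, i = j + 1 := ⟨i - 1, by omega⟩
      have := ih bb (fun j => g (j+1)) hbb (fun j => hg (j+1)) (by rw [← hT, hT0]) j (by omega)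
      exact this


lemma mid_mem {n : ℕ} (X : Finset (Fin n → ℤ)) (P : Set (Fin n → ℝ))
    (hP : P = convexHull ℝ (icast '' (X : Set (Fin n → ℤ))))
    (hvert : SHP X) {x y z : Fin n → ℤ}
    (hx : icast x ∈ P) (hy : icast y ∈ P) (hxy : x ≠ y)
    (hz : ∀ i, 2 * z i = x i + y i) :
    icast z ∈ P ∧ z ∉ X := by
  have hmid : icast z = (1/2 : ℝ) • icast x + (1/2 : ℝ) • icast y := by
    funext i
    have h1 : (2:ℝ) * (z i : ℝ) = (x i : ℝ) + (y i : ℝ) := by exact_mod_cast hz i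
    simp only [icast, Pi.add_apply, Pi.smul_apply, smul_eq_mul]
    linarith
  have hconv : Convex ℝ P := hP ▸ convex_convexHull ℝ _
  have hzP : icast z ∈ P := by
    rw [hmid]
    exact hconv hx hy (by norm_num) (by norm_num) (by norm_num)
  refine ⟨hzP, fun hzX => ?_⟩
  obtain ⟨f, g, hfg, hlt⟩ := hvert z hzX
  set φ : (Fin n → ℝ) → ℝ := fun p => ∑ i, f i * p i with hφ
  have hφaff : ∀ (a b : ℝ) (p q : Fin n → ℝ), φ (a • p + b • q) = a * φ p + b * φ q := by
    intro a b p q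
    simp only [hφ]
    rw [Finset.mul_sum, Finset.mul_sum, ← Finset.sum_add_distrib]
    refine Finset.sum_congr rfl fun i _ => ?_
    simp only [Pi.add_apply, Pi.smul_apply, smul_eq_mul]
    ring
  set C : Set (Fin n → ℝ) := {p | φ p ≤ g ∧ (φ p = g → p = icast z)} with hC
  have hCconv : Convex ℝ C := by
    intro p hp q hq a b ha hb hab
    have heval := hφaff a b p q
    constructor
    · rw [heval]
      calc a * φ p + b * φ q ≤ a * g + b * g := by
            exact add_le_add (mul_le_mul_of_nonneg_left hp.1 ha) (mul_le_mul_of_nonneg_left hq.1 hb)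
        _ = g := by rw [← add_mul, hab, one_mul]
    · intro heq
      rw [heval] at heq
      rcases eq_or_lt_of_le ha with ha0 | ha0
      · have hb1 : b = 1 := by linarith
        have hq' : φ q = g := by rw [← ha0, hb1] at heq; linarith
        rw [← ha0, hb1, hq.2 hq']; simp
      rcases eq_or_lt_of_le hb with hb0 | hb0
      · have ha1 : a = 1 := by linarith
        have hp' : φ p = g := by rw [← hb0, ha1] at heq; linarith
        rw [← hb0, ha1, hp.2 hp']; simp
      · have hpg : φ p = g := by
          by_contra hne
          have hlt2 : φ p < g := lt_of_le_of_ne hp.1 hne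
          have h1 : a * φ p < a * g := mul_lt_mul_of_pos_left hlt2 ha0
          have h2 : b * φ q ≤ b * g := mul_le_mul_of_nonneg_left hq.1 hb
          have h3 : a * g + b * g = g := by rw [← add_mul, hab, one_mul]
          linarith
        have hqg : φ q = g := by
          by_contra hne
          have hlt2 : φ q < g := lt_of_le_of_ne hq.1 hne
          have h1 : b * φ q < b * g := mul_lt_mul_of_pos_left hlt2 hb0
          have h2 : a * φ p ≤ a * g := mul_le_mul_of_nonneg_left hp.1 ha
          have h3 : a * g + b * g = g := by rw [← add_mul, hab, one_mul]
          linarith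
        rw [hp.2 hpg, hq.2 hqg]
        exact Convex.combo_self hab _
  have hXC : icast '' (X : Set (Fin n → ℤ)) ⊆ C := by
    rintro v ⟨x', hx'X, rfl⟩
    by_cases hx'z : x' = z
    · subst hx'z
      exact ⟨le_of_eq hfg, fun _ => rfl⟩
    · have hlt' := hlt x' hx'X hx'z
      exact ⟨hlt'.le, fun he => absurd he (ne_of_lt hlt')⟩
  have hPC : P ⊆ C := by
    rw [hP]
    exact convexHull_min hXC hCconv
  have hxC := hPC hx
  have hyC := hPC hy
  have hzg : φ (icast z) = g := hfg
  have havg : φ (icast z) = (1/2 : ℝ) * φ (icast x) + (1/2 : ℝ) * φ (icast y) := by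
    rw [hmid, hφaff]
  have hxg : φ (icast x) = g := by linarith [hxC.1, hyC.1, havg, hzg]
  have hyg : φ (icast y) = g := by linarith [hxC.1, hyC.1, havg, hzg]
  have h1 : x = z := icast_inj (hxC.2 hxg)
  have h2 : y = z := icast_inj (hyC.2 hyg)
  exact hxy (h1.trans h2.symm)


lemma S_finite {n : ℕ} (X : Finset (Fin n → ℤ)) (hne : X.Nonempty) (P : Set (Fin n → ℝ))
    (hP : P = convexHull ℝ (icast '' (X : Set (Fin n → ℤ)))) :
    {z : Fin n → ℤ | icast z ∈ P}.Finite := by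
  have hbound : ∀ i : Fin n, ∀ p ∈ P,
      ((X.inf' hne (fun z => z i) : ℤ) : ℝ) ≤ p i ∧ p i ≤ ((X.sup' hne (fun z => z i) : ℤ) : ℝ) := by
    intro i
    set lo : ℝ := ((X.inf' hne (fun z => z i) : ℤ) : ℝ) with hlo
    set hi : ℝ := ((X.sup' hne (fun z => z i) : ℤ) : ℝ) with hhi
    have hconvC : Convex ℝ {p : Fin n → ℝ | lo ≤ p i ∧ p i ≤ hi} := by
      intro p hp q hq a b ha hb hab
      simp only [Set.mem_setOf_eq, Pi.add_apply, Pi.smul_apply, smul_eq_mul] at *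
      have h3 : a * lo + b * lo = lo := by rw [← add_mul, hab, one_mul]
      have h4 : a * hi + b * hi = hi := by rw [← add_mul, hab, one_mul]
      have h1 := mul_le_mul_of_nonneg_left hp.1 ha
      have h2 := mul_le_mul_of_nonneg_left hq.1 hb
      have h5 := mul_le_mul_of_nonneg_left hp.2 ha
      have h6 := mul_le_mul_of_nonneg_left hq.2 hb
      constructor <;> linarith
    have hsub : icast '' (X : Set (Fin n → ℤ)) ⊆ {p : Fin n → ℝ | lo ≤ p i ∧ p i ≤ hi} := by
      rintro v ⟨x, hxX, rfl⟩
      have l1 : X.inf' hne (fun z => z i) ≤ x i := Finset.inf'_le _ hxX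
      have l2 : x i ≤ X.sup' hne (fun z => z i) := Finset.le_sup' (fun z => z i) hxX
      constructor
      · show lo ≤ icast x i
        simp only [icast, hlo]
        exact_mod_cast l1
      · show icast x i ≤ hi
        simp only [icast, hhi]
        exact_mod_cast l2
    intro p hp
    have := convexHull_min hsub hconvC
    rw [← hP] at this
    exact this hp
  have hsub2 : {z : Fin n → ℤ | icast z ∈ P} ⊆
      Set.univ.pi (fun i => Set.Icc (X.inf' hne (fun z => z i)) (X.sup' hne (fun z => z i))) := by
    intro z hz i _
    have h := hbound i _ hz
    simp only [icast] at h
    constructor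
    · exact_mod_cast h.1
    · exact_mod_cast h.2
  exact (Set.Finite.pi (fun i => Set.finite_Icc _ _)).subset hsub2


lemma chain {n : ℕ} (Sfin Mfin : Finset (Fin n → ℤ)) (w : (Fin n → ℤ) → ℤ)
    (hw2 : ∀ x y : Fin n → ℤ, (∀ i, ((x i : ZMod 2) = (y i : ZMod 2))) →
      2 * w (md x y) = w x + w y)
    (hmidM : ∀ x ∈ Sfin, ∀ y ∈ Sfin, x ≠ y → (∀ i, ((x i : ZMod 2) = (y i : ZMod 2))) →
      md x y ∈ Mfin)
    (C : Finset (Fin n → ℤ)) (hCS : C ⊆ Sfin)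
    (hwinj : ∀ x ∈ C, ∀ y ∈ C, w x = w y → x = y)
    (hpar : ∀ x ∈ C, ∀ y ∈ C, ∀ i, ((x i : ZMod 2) = (y i : ZMod 2)))
    (hm : 2 ≤ C.card) :
    ∃ b ∈ C, (∀ q ∈ C, w q ≤ w b) ∧
      ∃ Mid : Finset (Fin n → ℤ), Mid ⊆ Mfin ∧ Mid.card = 2 * C.card - 3 ∧
        ∀ p ∈ Mid, w p < w b := by
  set m := C.card with hmdef
  have hV : (C.image w).card = m := Finset.card_image_of_injOn hwinj
  set e := (C.image w).orderIsoOfFin hV with he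
  have hmem : ∀ j : Fin m, ((e j : ℤ)) ∈ C.image w := fun j => (e j).2
  set a : Fin m → (Fin n → ℤ) := fun j => (Finset.mem_image.mp (hmem j)).choose with ha
  have haC : ∀ j, a j ∈ C := fun j => (Finset.mem_image.mp (hmem j)).choose_spec.1
  have haw : ∀ j, w (a j) = ((e j : ℤ)) := fun j => (Finset.mem_image.mp (hmem j)).choose_spec.2
  have hm1 : m - 1 < m := by omega
  set A : ℕ → (Fin n → ℤ) := fun i => a ⟨min i (m-1), by omega⟩ with hA
  have hAC : ∀ i, A i ∈ C := fun i => haC _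
  have hAmono : ∀ i i' : ℕ, i < i' → i' ≤ m - 1 → w (A i) < w (A i') := by
    intro i i' h1 h2
    rw [hA]
    simp only
    rw [haw, haw]
    have : (⟨min i (m-1), by omega⟩ : Fin m) < ⟨min i' (m-1), by omega⟩ := by
      rw [Fin.mk_lt_mk]; omega
    exact_mod_cast e.strictMono this
  have hAmono' : ∀ i i' : ℕ, i ≤ i' → w (A i) ≤ w (A i') := by
    intro i i' h1
    rw [hA]
    simp only
    rw [haw, haw]
    have : (⟨min i (m-1), by omega⟩ : Fin m) ≤ ⟨min i' (m-1), by omega⟩ := by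
      rw [Fin.mk_le_mk]; omega
    exact_mod_cast e.monotone this
  set i1 : ℕ → ℕ := fun j => if j < m - 1 then 0 else j + 2 - m with hi1
  set i2 : ℕ → ℕ := fun j => if j < m - 1 then j + 1 else m - 1 with hi2
  set F : ℕ → (Fin n → ℤ) := fun j => md (A (i1 j)) (A (i2 j)) with hF
  have hidx : ∀ j, j ≤ 2*m - 4 → i1 j < i2 j ∧ i2 j ≤ m - 1 ∧ i1 j ≤ m - 2 := by
    intro j hj
    rw [hi1, hi2]
    by_cases h : j < m - 1 <;> simp only [h, if_true, if_false, reduceIte] <;> omega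
  have hkey : ∀ j, 2 * w (F j) = w (A (i1 j)) + w (A (i2 j)) := by
    intro j
    exact hw2 _ _ (hpar _ (hAC _) _ (hAC _))
  have hAne : ∀ j, j ≤ 2*m - 4 → A (i1 j) ≠ A (i2 j) := by
    intro j hj hcon
    obtain ⟨h1, h2, _⟩ := hidx j hj
    have := hAmono (i1 j) (i2 j) h1 h2
    rw [hcon] at this
    omega
  have hFM : ∀ j, j ≤ 2*m - 4 → F j ∈ Mfin := by
    intro j hj
    exact hmidM _ (hCS (hAC _)) _ (hCS (hAC _)) (hAne j hj) (hpar _ (hAC _) _ (hAC _))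
  have hKmono : ∀ j j' : ℕ, j < j' → j' ≤ 2*m - 4 → w (F j) < w (F j') := by
    intro j j' h1 h2
    have hk := hkey j
    have hk' := hkey j'
    have main : w (A (i1 j)) + w (A (i2 j)) < w (A (i1 j')) + w (A (i2 j')) := by
      rw [hi1, hi2]
      by_cases c1 : j' < m - 1
      · have c0 : j < m - 1 := by omega
        simp only [c0, c1, if_true, reduceIte]
        have := hAmono (j+1) (j'+1) (by omega) (by omega)
        omega
      · by_cases c0 : j < m - 1
        · simp only [c0, c1, if_true, if_false, reduceIte]
          have e1 : w (A 0) < w (A (j' + 2 - m)) := hAmono 0 (j'+2-m) (by omega) (by omega)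
          have e2 : w (A (j+1)) ≤ w (A (m-1)) := hAmono' (j+1) (m-1) (by omega)
          omega
        · simp only [c0, c1, if_false, reduceIte]
          have := hAmono (j+2-m) (j'+2-m) (by omega) (by omega)
          omega
    omega
  have hFinj : Set.InjOn F ↑(Finset.range (2*m - 3)) := by
    intro j hj j' hj' hEq
    simp only [Finset.coe_range, Set.mem_Iio] at hj hj'
    by_contra hne
    rcases Nat.lt_or_ge j j' with h | h
    · have := hKmono j j' h (by omega)
      rw [hEq] at this; omega
    · have h' : j' < j := by omega
      have := hKmono j' j h' (by omega)
      rw [hEq] at this; omega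
  refine ⟨A (m-1), hAC _, ?_, ?_⟩
  · intro q hq
    have hqV : w q ∈ C.image w := Finset.mem_image_of_mem w hq
    set j := e.symm ⟨w q, hqV⟩ with hj
    have : w q = ((e j : ℤ)) := by rw [hj, OrderIso.apply_symm_apply]
    rw [this, ← haw]
    have hje : (j : Fin m) ≤ ⟨m - 1, by omega⟩ := by
      rw [Fin.le_def]; simp; omega
    have := e.monotone hje
    have h2 : ((e j : ℤ)) ≤ ((e ⟨m-1, by omega⟩ : ℤ)) := by exact_mod_cast this
    have hAlast : A (m - 1) = a ⟨m - 1, hm1⟩ := by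
      rw [hA]; simp only [inf_idem]
    calc w (a j) = ((e j : ℤ)) := haw j
      _ ≤ ((e ⟨m-1, hm1⟩ : ℤ)) := h2
      _ = w (a ⟨m-1, hm1⟩) := (haw _).symm
      _ = w (A (m-1)) := by rw [hAlast]
  · refine ⟨(Finset.range (2*m - 3)).image F, ?_, ?_, ?_⟩
    · intro p hp
      obtain ⟨j, hj, rfl⟩ := Finset.mem_image.mp hp
      exact hFM j (by simp at hj; omega)
    · rw [Finset.card_image_of_injOn hFinj, Finset.card_range]
    · intro p hp
      obtain ⟨j, hj, rfl⟩ := Finset.mem_image.mp hp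
      simp only [Finset.mem_range] at hj
      obtain ⟨hx1, hx2, hx3⟩ := hidx j (by omega)
      have e1 : w (A (i1 j)) < w (A (m-1)) := hAmono (i1 j) (m-1) (by omega) (by omega)
      have e2 : w (A (i2 j)) ≤ w (A (m-1)) := hAmono' (i2 j) (m-1) (by omega)
      have := hkey j
      omega


end Stmt6
set_option maxHeartbeats 1000000 in
theorem stmt_6 {n k : ℕ} (hn : 2 ≤ n) (hk : 1 ≤ k)
    (X : Finset (Fin n → ℤ)) (P : Set (Fin n → ℝ))
    (hP : P = convexHull ℝ (icast '' (X : Set (Fin n → ℤ))))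
    (hvert : SHP X)
    (hcard : k * 2 ^ n - 2 * k + 3 ≤ X.card) :
    3 * k / 2 ≤ Set.ncard {z : Fin n → ℤ | icast z ∈ P ∧ z ∉ X} := by
  classical
  obtain ⟨N, hNdef⟩ : ∃ N, N = 2 ^ n := ⟨_, rfl⟩
  have hN4 : 4 ≤ N := by
    rw [hNdef]
    calc (4:ℕ) = 2 ^ 2 := by norm_num
      _ ≤ 2 ^ n := Nat.pow_le_pow_right (by norm_num) hn
  rw [← hNdef] at hcard
  have h2k : 2 * k ≤ k * N := by nlinarith
  have hXne : X.Nonempty := Finset.card_pos.1 (by omega)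
  have hSfinite := Stmt6.S_finite X hXne P hP
  obtain ⟨Sfin, hSfin⟩ : ∃ S : Finset (Fin n → ℤ), S = hSfinite.toFinset := ⟨_, rfl⟩
  have hSmem : ∀ z, z ∈ Sfin ↔ icast z ∈ P := by
    intro z
    rw [hSfin, Set.Finite.mem_toFinset]
    rfl
  have hXS : X ⊆ Sfin := by
    intro x hx
    rw [hSmem, hP]
    exact subset_convexHull ℝ _ (Set.mem_image_of_mem _ (by exact_mod_cast hx))
  obtain ⟨Mfin, hMfin⟩ : ∃ M : Finset (Fin n → ℤ), M = Sfin \ X := ⟨_, rfl⟩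
  have hMS : Mfin ⊆ Sfin := by rw [hMfin]; exact Finset.sdiff_subset
  have htarget : {z : Fin n → ℤ | icast z ∈ P ∧ z ∉ X} = ↑Mfin := by
    ext z
    rw [hMfin]
    simp only [Set.mem_setOf_eq, Finset.coe_sdiff, Set.mem_diff, Finset.mem_coe, ← hSmem z]
  rw [htarget, Set.ncard_coe_finset]
  obtain ⟨t, ht⟩ : ∃ t, t = Mfin.card := ⟨_, rfl⟩
  rw [← ht]
  -- weight function
  obtain ⟨B, hB⟩ : ∃ B : ℕ, ∀ z ∈ Sfin, ∀ i, (z i).natAbs ≤ B := by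
    refine ⟨Sfin.sup (fun z => Finset.univ.sup fun i => (z i).natAbs), ?_⟩
    intro z hz i
    have h1 : (z i).natAbs ≤ Finset.univ.sup (fun i => (z i).natAbs) :=
      Finset.le_sup (f := fun i => (z i).natAbs) (Finset.mem_univ i)
    have h2 : Finset.univ.sup (fun i => (z i).natAbs)
        ≤ Sfin.sup (fun z => Finset.univ.sup fun i => (z i).natAbs) :=
      Finset.le_sup (f := fun z => Finset.univ.sup fun i => (z i).natAbs) hz
    exact le_trans h1 h2
  obtain ⟨bb, hbb⟩ : ∃ b : ℤ, b = 2 * B + 1 := ⟨_, rfl⟩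
  have hbbpos : 0 < bb := by rw [hbb]; positivity
  obtain ⟨w, hw⟩ : ∃ w : (Fin n → ℤ) → ℤ, w = fun z => ∑ i : Fin n, z i * bb ^ (i : ℕ) :=
    ⟨_, rfl⟩
  have hw2 : ∀ x y : Fin n → ℤ, (∀ i, ((x i : ZMod 2) = (y i : ZMod 2))) →
      2 * w (Stmt6.md x y) = w x + w y := by
    intro x y hp
    rw [hw]
    simp only
    rw [Finset.mul_sum, ← Finset.sum_add_distrib]
    refine Finset.sum_congr rfl fun i _ => ?_
    have := Stmt6.md_spec hp i
    linear_combination (bb ^ (i : ℕ)) * this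
  have hwinj : ∀ x ∈ Sfin, ∀ y ∈ Sfin, w x = w y → x = y := by
    intro x hx y hy hweq
    obtain ⟨g, hg⟩ : ∃ g : ℕ → ℤ, g = fun i => if h : i < n then x ⟨i, h⟩ - y ⟨i, h⟩ else 0 :=
      ⟨_, rfl⟩
    have hsum0 : ∑ i ∈ Finset.range n, g i * bb ^ i = 0 := by
      have h1 : ∑ i ∈ Finset.range n, g i * bb ^ i = ∑ i : Fin n, g (i : ℕ) * bb ^ (i : ℕ) :=
        (Fin.sum_univ_eq_sum_range (fun j => g j * bb ^ j) n).symm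
      rw [h1]
      have h2 : ∀ i : Fin n, g (i : ℕ) * bb ^ (i : ℕ) = x i * bb ^ (i : ℕ) - y i * bb ^ (i : ℕ) := by
        intro i
        rw [hg]
        simp only [dif_pos i.2, Fin.eta]
        ring
      calc ∑ i : Fin n, g (i : ℕ) * bb ^ (i : ℕ)
          = ∑ i : Fin n, (x i * bb ^ (i : ℕ) - y i * bb ^ (i : ℕ)) :=
            Finset.sum_congr rfl (fun i _ => h2 i)
        _ = w x - w y := by rw [hw]; rw [Finset.sum_sub_distrib]
        _ = 0 := by rw [hweq]; ring
    have hgb : ∀ i, |g i| < bb := by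
      intro i
      rw [hg]
      by_cases h : i < n
      · simp only [dif_pos h]
        have b1 := hB x hx ⟨i, h⟩
        have b2 := hB y hy ⟨i, h⟩
        have e1 : |x ⟨i,h⟩| ≤ (B:ℤ) := by
          rw [Int.abs_eq_natAbs]; exact_mod_cast b1
        have e2 : |y ⟨i,h⟩| ≤ (B:ℤ) := by
          rw [Int.abs_eq_natAbs]; exact_mod_cast b2
        have e3 := abs_le.1 e1
        have e4 := abs_le.1 e2
        rw [abs_sub_lt_iff, hbb]
        constructor <;> linarith [e3.1, e3.2, e4.1, e4.2]
      · simp only [dif_neg h]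
        simpa using hbbpos
    have hzero := Stmt6.digit_zero n bb g hbbpos hgb hsum0
    funext i
    have hz := hzero (i : ℕ) i.2
    rw [hg] at hz
    simp only [dif_pos i.2, Fin.eta] at hz
    linarith [hz]
  have hmidM : ∀ x ∈ Sfin, ∀ y ∈ Sfin, x ≠ y → (∀ i, ((x i : ZMod 2) = (y i : ZMod 2))) →
      Stmt6.md x y ∈ Mfin := by
    intro x hx y hy hne hp
    have hzx : icast x ∈ P := (hSmem x).1 hx
    have hzy : icast y ∈ P := (hSmem y).1 hy
    obtain ⟨hzP, hzX⟩ := Stmt6.mid_mem X P hP hvert hzx hzy hne (Stmt6.md_spec hp)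
    rw [hMfin, Finset.mem_sdiff]
    exact ⟨(hSmem _).2 hzP, hzX⟩
  -- parity classes
  obtain ⟨cmap, hcmap⟩ : ∃ c : (Fin n → ℤ) → (Fin n → ZMod 2),
      c = fun z i => ((z i : ZMod 2)) := ⟨_, rfl⟩
  obtain ⟨cls, hcls⟩ : ∃ c : (Fin n → ZMod 2) → Finset (Fin n → ℤ),
      c = fun ε => Sfin.filter (fun z => cmap z = ε) := ⟨_, rfl⟩
  have hclsS : ∀ ε, cls ε ⊆ Sfin := by
    intro ε
    rw [hcls]
    exact Finset.filter_subset _ _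
  have hclsmem : ∀ ε z, z ∈ cls ε ↔ (z ∈ Sfin ∧ cmap z = ε) := by
    intro ε z
    rw [hcls]
    exact Finset.mem_filter
  have hclspar : ∀ ε, ∀ x ∈ cls ε, ∀ y ∈ cls ε, ∀ i, ((x i : ZMod 2) = (y i : ZMod 2)) := by
    intro ε x hx y hy i
    have h1 : cmap x = ε := ((hclsmem ε x).1 hx).2
    have h2 : cmap y = ε := ((hclsmem ε y).1 hy).2
    have h3 := congrFun (h1.trans h2.symm) i
    rw [hcmap] at h3
    exact h3
  have hNcard : Fintype.card (Fin n → ZMod 2) = N := by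
    rw [hNdef]
    simp
  have hcardS : Sfin.card = X.card + t := by
    have h1 : Mfin.card = Sfin.card - X.card := by rw [hMfin]; exact Finset.card_sdiff_of_subset hXS
    have h2 : X.card ≤ Sfin.card := Finset.card_le_card hXS
    omega
  have hsum_even : (∀ ε : Fin n → ZMod 2, 2 * (cls ε).card ≤ t + 2) →
      2 * (X.card + t) ≤ N * (t + 2) := by
    intro heach
    have hsumcls : Sfin.card = ∑ ε : Fin n → ZMod 2, (cls ε).card := by
      rw [hcls]
      exact Finset.card_eq_sum_card_fiberwise (fun x _ => Finset.mem_univ _)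
    have hle0 : ∑ ε : Fin n → ZMod 2, 2 * (cls ε).card ≤ ∑ _ε : Fin n → ZMod 2, (t + 2) :=
      Finset.sum_le_sum (fun ε _ => heach ε)
    rw [Finset.sum_const, Finset.card_univ, hNcard, smul_eq_mul, ← Finset.mul_sum,
      ← hsumcls] at hle0
    rw [← hcardS]
    exact hle0
  have hsum_odd : (∀ ε : Fin n → ZMod 2, 2 * (cls ε).card ≤ t + 3) →
      ∀ εs : Fin n → ZMod 2, 2 * (X.card + t) ≤ 2 * (cls εs).card + (N - 1) * (t + 3) := by
    intro hb εs
    have hsumcls : Sfin.card = ∑ ε : Fin n → ZMod 2, (cls ε).card := by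
      rw [hcls]
      exact Finset.card_eq_sum_card_fiberwise (fun x _ => Finset.mem_univ _)
    have hdecomp : (cls εs).card + ∑ ε ∈ Finset.univ.erase εs, (cls ε).card
        = ∑ ε : Fin n → ZMod 2, (cls ε).card :=
      Finset.add_sum_erase _ (fun ε => (cls ε).card) (Finset.mem_univ _)
    have herasebound : ∑ ε ∈ Finset.univ.erase εs, 2 * (cls ε).card
        ≤ (N - 1) * (t + 3) := by
      calc ∑ ε ∈ Finset.univ.erase εs, 2 * (cls ε).card
          ≤ ∑ _ε ∈ Finset.univ.erase εs, (t + 3) :=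
            Finset.sum_le_sum (fun ε _ => hb ε)
        _ = (N - 1) * (t + 3) := by
            rw [Finset.sum_const, Finset.card_erase_of_mem (Finset.mem_univ _),
              Finset.card_univ, hNcard, smul_eq_mul]
    calc 2 * (X.card + t)
        = 2 * (cls εs).card + ∑ ε ∈ Finset.univ.erase εs, 2 * (cls ε).card := by
          rw [← hcardS, hsumcls, ← hdecomp, mul_add, Finset.mul_sum]
      _ ≤ 2 * (cls εs).card + (N - 1) * (t + 3) := Nat.add_le_add le_rfl herasebound
  have hclsbound : ∀ ε, 2 * (cls ε).card ≤ t + 3 := by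
    intro ε
    by_cases hc2 : 2 ≤ (cls ε).card
    · obtain ⟨b, hbC, hbmax, Mid, hMidM, hMidcard, hMidlt⟩ :=
        Stmt6.chain Sfin Mfin w hw2 hmidM (cls ε) (hclsS ε)
          (fun x hx y hy => hwinj x (hclsS ε hx) y (hclsS ε hy)) (hclspar ε) hc2
      have hcc := Finset.card_le_card hMidM
      omega
    · omega
  -- final bound
  have hfinal : 2 * k - 1 ≤ t := by
    by_contra hcon
    push_neg at hcon
    have hcon' : t ≤ 2 * k - 2 := by omega
    rcases Nat.even_or_odd t with hev | hodd
    · -- even case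
      obtain ⟨r, hr⟩ := hev
      have heach : ∀ ε : Fin n → ZMod 2, 2 * (cls ε).card ≤ t + 2 := by
        intro ε
        have := hclsbound ε
        omega
      have hle'' : 2 * (X.card + t) ≤ N * (t + 2) := hsum_even heach
      have hz1 : (2:ℤ) * ((X.card : ℤ) + t) ≤ (N:ℤ) * ((t:ℤ) + 2) := by exact_mod_cast hle''
      have hz2 : (k:ℤ) * N - 2 * k + 3 ≤ (X.card : ℤ) := by
        zify [h2k] at hcard
        exact_mod_cast hcard
      have hzt : (t:ℤ) ≤ 2 * (k:ℤ) - 2 := by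
        have h22 : (2:ℕ) ≤ 2 * k := by omega
        zify [h22] at hcon'
        exact_mod_cast hcon'
      have hzN : (4:ℤ) ≤ (N:ℤ) := by exact_mod_cast hN4
      have key : (0:ℤ) ≤ ((N:ℤ) - 2) * (2 * (k:ℤ) - 2 - t) :=
        mul_nonneg (by linarith) (by linarith)
      nlinarith [key, hz1, hz2]
    · -- odd case
      have ht1 : 1 ≤ t := by
        rcases hodd with ⟨r, hr⟩
        omega
      have hMne : Mfin.Nonempty := Finset.card_pos.1 (by omega)
      obtain ⟨p, hpM, hpmax⟩ := Finset.exists_max_image Mfin w hMne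
      have hpS : p ∈ Sfin := hMS hpM
      obtain ⟨εs, hεs⟩ : ∃ e, e = cmap p := ⟨_, rfl⟩
      have hpC : p ∈ cls εs := (hclsmem εs p).2 ⟨hpS, hεs.symm⟩
      have hrefined : 2 * (cls εs).card ≤ t + 2 := by
        by_cases hc2 : 2 ≤ (cls εs).card
        · obtain ⟨b, hbC, hbmax, Mid, hMidM, hMidcard, hMidlt⟩ :=
            Stmt6.chain Sfin Mfin w hw2 hmidM (cls εs) (hclsS εs)
              (fun x hx y hy => hwinj x (hclsS εs hx) y (hclsS εs hy)) (hclspar εs) hc2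
          rcases eq_or_lt_of_le (hbmax p hpC) with heq | hlt2
          · have hnotin : p ∉ Mid := by
              intro hin
              have := hMidlt p hin
              omega
            have hins : insert p Mid ⊆ Mfin := Finset.insert_subset hpM hMidM
            have hc : (insert p Mid).card = Mid.card + 1 := Finset.card_insert_of_notMem hnotin
            have hcc := Finset.card_le_card hins
            omega
          · exfalso
            have hpb : p ≠ b := by
              intro h
              rw [h] at hlt2
              omega
            have hpC' : p ∈ (cls εs).erase b := Finset.mem_erase.2 ⟨hpb, hpC⟩
            obtain ⟨a0, ha0C', ha0max⟩ := Finset.exists_max_image ((cls εs).erase b) w ⟨p, hpC'⟩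
            have ha0C : a0 ∈ cls εs := Finset.erase_subset _ _ ha0C'
            have ha0b : a0 ≠ b := (Finset.mem_erase.1 ha0C').1
            have hτ : Stmt6.md a0 b ∈ Mfin :=
              hmidM a0 (hclsS εs ha0C) b (hclsS εs hbC) ha0b
                (hclspar εs a0 ha0C b hbC)
            have h1 := hpmax _ hτ
            have h2 := ha0max p hpC'
            have h3 := hw2 a0 b (hclspar εs a0 ha0C b hbC)
            omega
        · omega
      have htotal : 2 * (X.card + t) ≤ (t + 2) + (N - 1) * (t + 3) := by
        have h0 := hsum_odd hclsbound εs
        omega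
      -- cast to ℤ
      have hz2 : (k:ℤ) * N - 2 * k + 3 ≤ (X.card : ℤ) := by
        zify [h2k] at hcard
        exact_mod_cast hcard
      have hzt : (t:ℤ) ≤ 2 * (k:ℤ) - 3 := by
        have h23 : t ≤ 2 * k - 3 := by
          rcases hodd with ⟨r, hr⟩
          omega
        have h3k : (3:ℕ) ≤ 2 * k ∨ t = 0 := by omega
        rcases h3k with h3k | h0
        · zify [h3k] at h23
          exact_mod_cast h23
        · omega
      have hz1 : (2:ℤ) * ((X.card:ℤ) + t) ≤ ((t:ℤ) + 2) + ((N:ℤ) - 1) * ((t:ℤ) + 3) := by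
        have hN1 : (1:ℕ) ≤ N := by omega
        zify [hN1] at htotal
        exact_mod_cast htotal
      have hzN : (4:ℤ) ≤ (N:ℤ) := by exact_mod_cast hN4
      have key : (0:ℤ) ≤ ((N:ℤ) - 2) * (2 * (k:ℤ) - 3 - t) :=
        mul_nonneg (by linarith) (by linarith)
      nlinarith [key, hz1, hz2]
  omega
end

section
/- (Doignon–Bell–Scarf) If A is an m × n real matrix and b ∈ R^m such that {x ∈ Z^n : Ax ≤ b} is empty, then there is a subset S of the rows with |S| ≤ 2^n such that {x ∈ Z^n : A_S x ≤ b_S} is also empty. -/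
theorem stmt_8 {m n : ℕ} (A : Matrix (Fin m) (Fin n) ℝ) (b : Fin m → ℝ)
    (h : {y : Fin n → ℤ | ∀ i, ∑ j, A i j * (y j : ℝ) ≤ b i} = ∅) :
    ∃ S : Finset (Fin m), S.card ≤ 2 ^ n ∧
      {y : Fin n → ℤ | ∀ i ∈ S, ∑ j, A i j * (y j : ℝ) ≤ b i} = ∅ := by
  classical
  set R : Fin m → (Fin n → ℤ) → ℝ := fun i y => ∑ j, A i j * (y j : ℝ) with hRdef
  -- the whole system is infeasible
  have hinf : ∀ y : Fin n → ℤ, ∃ i, b i < R i y := by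
    intro y
    by_contra hc
    push_neg at hc
    have hy : y ∈ {y : Fin n → ℤ | ∀ i, ∑ j, A i j * (y j : ℝ) ≤ b i} := hc
    rw [h] at hy
    exact hy
  -- pick a minimum-cardinality infeasible subsystem S₀
  have hex : ∃ k, ∃ S : Finset (Fin m), S.card = k ∧
      ∀ y : Fin n → ℤ, ∃ i ∈ S, b i < R i y := by
    refine ⟨Finset.univ.card, Finset.univ, rfl, fun y => ?_⟩
    obtain ⟨i, hi⟩ := hinf y
    exact ⟨i, Finset.mem_univ i, hi⟩
  obtain ⟨S₀, hcard, hS₀⟩ := Nat.find_spec hex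
  have hmin : ∀ S' : Finset (Fin m),
      (∀ y : Fin n → ℤ, ∃ i ∈ S', b i < R i y) → Nat.find hex ≤ S'.card :=
    fun S' h' => Nat.find_le ⟨S', rfl, h'⟩
  -- witnesses for the proper subsystems
  have hwit : ∀ i ∈ S₀, ∃ z : Fin n → ℤ, ∀ k ∈ S₀, k ≠ i → R k z ≤ b k := by
    intro i hi
    by_contra hc
    push_neg at hc
    have h' : ∀ y : Fin n → ℤ, ∃ k ∈ S₀.erase i, b k < R k y := by
      intro y
      obtain ⟨k, hk, hki, hlt⟩ := hc y
      exact ⟨k, Finset.mem_erase.mpr ⟨hki, hk⟩, hlt⟩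
    have h1 := hmin (S₀.erase i) h'
    have h2 := Finset.card_erase_lt_of_mem hi
    omega
  have hwit' : ∀ i : Fin m, ∃ z : Fin n → ℤ,
      i ∈ S₀ → ∀ k ∈ S₀, k ≠ i → R k z ≤ b k := by
    intro i
    by_cases hi : i ∈ S₀
    · obtain ⟨z, hz⟩ := hwit i hi
      exact ⟨z, fun _ => hz⟩
    · exact ⟨0, fun hh => absurd hh hi⟩
  choose z hz using hwit'
  -- S₀ is nonempty
  have hS₀ne : S₀.Nonempty := by
    rcases Finset.eq_empty_or_nonempty S₀ with he | hne
    · obtain ⟨i, hi, _⟩ := hS₀ 0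
      rw [he] at hi
      exact absurd hi (Finset.notMem_empty i)
    · exact hne
  -- the box of witnesses
  set L : Fin n → ℤ := fun c => S₀.inf' hS₀ne (fun i => z i c) with hLdef
  set U : Fin n → ℤ := fun c => S₀.sup' hS₀ne (fun i => z i c) with hUdef
  set W : Finset (Fin n → ℤ) := Finset.Icc L U with hWdef
  have hzW : ∀ i ∈ S₀, z i ∈ W := by
    intro i hi
    rw [hWdef, Finset.mem_Icc]
    constructor
    · intro c
      exact Finset.inf'_le (fun i => z i c) hi
    · intro c
      exact Finset.le_sup' (fun i => z i c) hi
  -- perturbation ε and b'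
  set viol : Fin m → Finset (Fin n → ℤ) := fun k => W.filter (fun w => b k < R k w) with hviol
  have hviolpos : ∀ k, ∀ hk : (viol k).Nonempty,
      0 < (viol k).inf' hk (fun w => R k w - b k) := by
    intro k hk
    rw [Finset.lt_inf'_iff]
    intro w hw
    have := (Finset.mem_filter.mp hw).2
    linarith
  set ε : Fin m → ℝ := fun k =>
    if hk : (viol k).Nonempty then ((viol k).inf' hk (fun w => R k w - b k)) / 2 else 1
    with hεdef
  have hεpos : ∀ k, 0 < ε k := by
    intro k
    simp only [hεdef]
    by_cases hk : (viol k).Nonempty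
    · rw [dif_pos hk]
      have := hviolpos k hk
      linarith
    · rw [dif_neg hk]
      norm_num
  have hεlt : ∀ k, ∀ w ∈ W, b k < R k w → ε k < R k w - b k := by
    intro k w hwW hbw
    have hmem : w ∈ viol k := Finset.mem_filter.mpr ⟨hwW, hbw⟩
    have hk : (viol k).Nonempty := ⟨w, hmem⟩
    simp only [hεdef]
    rw [dif_pos hk]
    have h1 : (viol k).inf' hk (fun w => R k w - b k) ≤ R k w - b k :=
      Finset.inf'_le _ hmem
    have h2 := hviolpos k hk
    linarith
  set b' : Fin m → ℝ := fun k => b k + ε k with hb'def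
  -- key facts about the perturbed system
  have hα : ∀ w ∈ W, ∃ i ∈ S₀, b' i < R i w := by
    intro w hw
    obtain ⟨i, hi, hbi⟩ := hS₀ w
    refine ⟨i, hi, ?_⟩
    have := hεlt i w hw hbi
    simp only [hb'def]
    linarith
  have hβ : ∀ i ∈ S₀, ∀ k ∈ S₀, k ≠ i → R k (z i) < b' k := by
    intro i hi k hk hki
    have h1 := hz i hi k hk hki
    have h2 := hεpos k
    simp only [hb'def]
    linarith
  -- the grid of candidate relaxation values
  have hinsne : ∀ i : Fin m, (insert (0:ℝ) (W.image (fun w => R i w - b' i))).Nonempty :=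
    fun i => Finset.insert_nonempty _ _
  set Mbig : Fin m → ℝ := fun i =>
    1 + (insert (0:ℝ) (W.image (fun w => R i w - b' i))).max' (hinsne i) with hMdef
  have hMbig_val : ∀ i, ∀ w ∈ W, R i w - b' i < Mbig i := by
    intro i w hw
    have h1 : R i w - b' i ≤ (insert (0:ℝ) (W.image (fun w => R i w - b' i))).max' (hinsne i) :=
      Finset.le_max' (insert (0:ℝ) (W.image (fun w => R i w - b' i))) (R i w - b' i)
        (Finset.mem_insert_of_mem (Finset.mem_image_of_mem (fun w => R i w - b' i) hw))
    simp only [hMdef]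
    linarith
  have hMbig_pos : ∀ i, 0 < Mbig i := by
    intro i
    have h1 : (0:ℝ) ≤ (insert (0:ℝ) (W.image (fun w => R i w - b' i))).max' (hinsne i) :=
      Finset.le_max' (insert (0:ℝ) (W.image (fun w => R i w - b' i))) 0
        (Finset.mem_insert_self _ _)
    simp only [hMdef]
    linarith
  set val : Fin m → Finset ℝ := fun i =>
    insert (0:ℝ) (insert (Mbig i)
      ((W.filter (fun w => 0 ≤ R i w - b' i)).image (fun w => R i w - b' i))) with hvaldef
  have hval0 : ∀ i, (0:ℝ) ∈ val i := fun i => Finset.mem_insert_self _ _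
  have hvalnn : ∀ i, ∀ v ∈ val i, 0 ≤ v := by
    intro i v hv
    simp only [hvaldef] at hv
    simp only [Finset.mem_insert, Finset.mem_image, Finset.mem_filter] at hv
    rcases hv with rfl | rfl | ⟨w, ⟨hwW, hw0⟩, rfl⟩
    · exact le_refl 0
    · exact (hMbig_pos i).le
    · exact hw0
  set Blocked : (Fin m → ℝ) → Prop := fun lam => ∀ w ∈ W, ∃ i ∈ S₀, lam i ≤ R i w - b' i
    with hBdef
  set Gf : Finset (Fin m → ℝ) := (Fintype.piFinset val).filter Blocked with hGfdef
  have h0Gf : (fun _ => (0:ℝ)) ∈ Gf := by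
    rw [hGfdef, Finset.mem_filter]
    constructor
    · rw [Fintype.mem_piFinset]
      intro i
      exact hval0 i
    · intro w hw
      obtain ⟨i, hi, hbi⟩ := hα w hw
      refine ⟨i, hi, ?_⟩
      show (0:ℝ) ≤ R i w - b' i
      linarith
  obtain ⟨lam, hlamGf, hlammax⟩ :=
    Finset.exists_max_image Gf (fun lam => ∑ i ∈ S₀, lam i) ⟨_, h0Gf⟩
  have hlamGrid : lam ∈ Fintype.piFinset val := (Finset.mem_filter.mp hlamGf).1
  have hlamB : Blocked lam := (Finset.mem_filter.mp hlamGf).2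
  have hlamnn : ∀ i, 0 ≤ lam i := fun i =>
    hvalnn i _ (Fintype.mem_piFinset.mp hlamGrid i)
  -- bound on lam i via the witnesses
  have hγ : ∀ i ∈ S₀, lam i ≤ R i (z i) - b' i := by
    intro i hi
    obtain ⟨k, hk, hkle⟩ := hlamB (z i) (hzW i hi)
    by_cases hki : k = i
    · rw [hki] at hkle
      exact hkle
    · exfalso
      have h1 := hβ i hi k hk hki
      have h2 := hlamnn k
      linarith
  -- facet points
  have hδ : ∀ i ∈ S₀, ∃ w ∈ W, R i w - b' i = lam i ∧
      ∀ k ∈ S₀, k ≠ i → R k w - b' k < lam k := by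
    intro i hi
    by_contra hno
    push_neg at hno
    set D : Finset (Fin n → ℤ) :=
      W.filter (fun w => ∀ k ∈ S₀, k ≠ i → R k w - b' k < lam k) with hDdef
    have hDgt : ∀ w ∈ D, lam i < R i w - b' i := by
      intro w hw
      obtain ⟨hwW, hwstrict⟩ := Finset.mem_filter.mp hw
      obtain ⟨k, hk, hkle⟩ := hlamB w hwW
      have hki : k = i := by
        by_contra hki
        exact absurd hkle (not_le.mpr (hwstrict k hk hki))
      rw [hki] at hkle
      rcases lt_or_eq_of_le hkle with hlt | heq
      · exact hlt
      · exfalso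
        obtain ⟨k', hk', hk'i, hk'ge⟩ := hno w hwW heq.symm
        exact absurd (hwstrict k' hk' hk'i) (not_lt.mpr hk'ge)
    obtain ⟨v, hvval, hvgt, hvblock⟩ : ∃ v ∈ val i, lam i < v ∧
        ∀ w ∈ D, v ≤ R i w - b' i := by
      by_cases hDne : D.Nonempty
      · obtain ⟨w₀, hw₀D, hw₀min⟩ :=
          Finset.exists_min_image D (fun w => R i w - b' i) hDne
        refine ⟨R i w₀ - b' i, ?_, hDgt w₀ hw₀D, fun w hw => hw₀min w hw⟩
        have hw₀W : w₀ ∈ W := (Finset.mem_filter.mp hw₀D).1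
        have h0v : 0 ≤ R i w₀ - b' i := le_of_lt (lt_of_le_of_lt (hlamnn i) (hDgt w₀ hw₀D))
        simp only [hvaldef]
        exact Finset.mem_insert_of_mem (Finset.mem_insert_of_mem
          (Finset.mem_image_of_mem _ (Finset.mem_filter.mpr ⟨hw₀W, h0v⟩)))
      · refine ⟨Mbig i, ?_, ?_, ?_⟩
        · simp only [hvaldef]
          exact Finset.mem_insert_of_mem (Finset.mem_insert_self _ _)
        · exact lt_of_le_of_lt (hγ i hi) (hMbig_val i (z i) (hzW i hi))
        · intro w hw
          exact absurd ⟨w, hw⟩ hDne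
    set lam' : Fin m → ℝ := Function.update lam i v with hlam'def
    have hlam'Gf : lam' ∈ Gf := by
      rw [hGfdef, Finset.mem_filter]
      constructor
      · rw [Fintype.mem_piFinset]
        intro k
        by_cases hk : k = i
        · rw [hk, hlam'def, Function.update_self]
          exact hvval
        · rw [hlam'def, Function.update_of_ne hk]
          exact Fintype.mem_piFinset.mp hlamGrid k
      · intro w hwW
        by_cases hwD : w ∈ D
        · refine ⟨i, hi, ?_⟩
          rw [hlam'def, Function.update_self]
          exact hvblock w hwD
        · have hnot : ¬ (∀ k ∈ S₀, k ≠ i → R k w - b' k < lam k) := by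
            intro hc
            exact hwD (Finset.mem_filter.mpr ⟨hwW, hc⟩)
          push_neg at hnot
          obtain ⟨k, hk, hki, hkge⟩ := hnot
          refine ⟨k, hk, ?_⟩
          rw [hlam'def, Function.update_of_ne hki]
          exact hkge
    have hsum : ∑ k ∈ S₀, lam k < ∑ k ∈ S₀, lam' k := by
      rw [hlam'def, Finset.sum_update_of_mem hi, Finset.sdiff_singleton_eq_erase,
        ← Finset.add_sum_erase _ lam hi]
      have : ∑ k ∈ S₀.erase i, lam k ≤ ∑ k ∈ S₀.erase i, lam k := le_refl _
      linarith
    have := hlammax lam' hlam'Gf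
    linarith
  -- choose facet points
  have hδ' : ∀ i : Fin m, ∃ w : Fin n → ℤ,
      i ∈ S₀ → (w ∈ W ∧ R i w - b' i = lam i ∧
        ∀ k ∈ S₀, k ≠ i → R k w - b' k < lam k) := by
    intro i
    by_cases hi : i ∈ S₀
    · obtain ⟨w, hwW, h1, h2⟩ := hδ i hi
      exact ⟨w, fun _ => ⟨hwW, h1, h2⟩⟩
    · exact ⟨0, fun hh => absurd hh hi⟩
  choose wp hwp using hδ'
  -- parity map is injective on S₀
  have hinj : Set.InjOn (fun i => (fun c => ((wp i c : ZMod 2)))) ↑S₀ := by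
    intro i hi j hj hij
    by_contra hne
    have hi' : i ∈ S₀ := hi
    have hj' : j ∈ S₀ := hj
    obtain ⟨hWi, heqi, hstricti⟩ := hwp i hi'
    obtain ⟨hWj, heqj, hstrictj⟩ := hwp j hj'
    -- all coordinates have even sum
    have heven : ∀ c, (2:ℤ) ∣ (wp i c + wp j c) := by
      intro c
      have hc : ((wp i c : ZMod 2)) = ((wp j c : ZMod 2)) := congrFun hij c
      have h2 : (((wp i c - wp j c : ℤ)) : ZMod 2) = 0 := by
        push_cast
        rw [hc]
        ring
      have hdvd : ((2:ℕ):ℤ) ∣ (wp i c - wp j c) :=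
        (ZMod.intCast_zmod_eq_zero_iff_dvd _ 2).mp h2
      obtain ⟨t, ht⟩ := hdvd
      exact ⟨t + wp j c, by push_cast at ht; omega⟩
    have hevenf : ∀ c, ∃ t : ℤ, wp i c + wp j c = 2 * t := by
      intro c
      obtain ⟨t, ht⟩ := heven c
      exact ⟨t, ht⟩
    choose mid hmid2 using hevenf
    have hmidW : mid ∈ W := by
      rw [hWdef, Finset.mem_Icc] at hWi hWj ⊢
      obtain ⟨hLi, hUi⟩ := hWi
      obtain ⟨hLj, hUj⟩ := hWj
      constructor
      · intro c
        show L c ≤ mid c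
        have h1 : L c ≤ wp i c := hLi c
        have h2 : L c ≤ wp j c := hLj c
        have h3 : wp i c + wp j c = 2 * mid c := hmid2 c
        omega
      · intro c
        show mid c ≤ U c
        have h1 : wp i c ≤ U c := hUi c
        have h2 : wp j c ≤ U c := hUj c
        have h3 : wp i c + wp j c = 2 * mid c := hmid2 c
        omega
    have hmidR : ∀ k, 2 * R k mid = R k (wp i) + R k (wp j) := by
      intro k
      simp only [hRdef]
      rw [Finset.mul_sum, ← Finset.sum_add_distrib]
      refine Finset.sum_congr rfl (fun c _ => ?_)
      have h3 : wp i c + wp j c = 2 * mid c := hmid2 c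
      have hcast : (2:ℝ) * ((mid c : ℤ) : ℝ) = ((wp i c : ℤ) : ℝ) + ((wp j c : ℤ) : ℝ) := by
        exact_mod_cast (congrArg (fun t : ℤ => (t : ℝ)) h3).symm
      calc 2 * (A k c * ((mid c : ℤ) : ℝ)) = A k c * ((2:ℝ) * ((mid c : ℤ) : ℝ)) := by ring
        _ = A k c * (((wp i c : ℤ) : ℝ) + ((wp j c : ℤ) : ℝ)) := by rw [hcast]
        _ = A k c * ((wp i c : ℤ) : ℝ) + A k c * ((wp j c : ℤ) : ℝ) := by ring
    obtain ⟨k, hk, hkle⟩ := hlamB mid hmidW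
    have hklt : R k mid - b' k < lam k := by
      by_cases hki : k = i
      · have h1 : R k (wp j) - b' k < lam k := hstrictj k hk (by rw [hki]; exact hne)
        have h2 : R k (wp i) - b' k = lam k := by rw [hki]; exact heqi
        have h3 := hmidR k
        linarith
      · by_cases hkj : k = j
        · have h1 : R k (wp i) - b' k < lam k := hstricti k hk hki
          have h2 : R k (wp j) - b' k = lam k := by rw [hkj]; exact heqj
          have h3 := hmidR k
          linarith
        · have h1 : R k (wp i) - b' k < lam k := hstricti k hk hki
          have h2 : R k (wp j) - b' k < lam k := hstrictj k hk hkj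
          have h3 := hmidR k
          linarith
    linarith
  -- the cardinality bound
  have hcard2 : S₀.card ≤ 2 ^ n := by
    have hle := Finset.card_le_card_of_injOn (fun i => (fun c => ((wp i c : ZMod 2))))
      (fun a _ => Finset.mem_univ _) hinj
    have hcu : (Finset.univ : Finset (Fin n → ZMod 2)).card = 2 ^ n := by
      rw [Finset.card_univ]
      rw [Fintype.card_fun]
      simp
    rw [hcu] at hle
    exact hle
  refine ⟨S₀, hcard2, ?_⟩
  rw [Set.eq_empty_iff_forall_notMem]
  intro y hy
  obtain ⟨i, hi, hbi⟩ := hS₀ y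
  exact absurd (hy i hi) (not_le.mpr hbi)
end

section
/- Let n ≥ 1 and let P ⊂ R^n be the polyhedron defined by: for j = 1,…,n, the inequalities ±(Σ_{i<j} x_i/2^i + x_j + Σ_{i>j} x_i/2^{i−1}) ≤ 1; and for every subset N ⊆ {1,…,n} with |N| ≥ 2, the inequalities ±(−x_{ℓ_N}/|N| + Σ_{i∈N, i≠ℓ_N} x_i/|N| − Σ_{i∉N} x_i/|N|^n) ≤ 1, where ℓ_N = min N. Then every integer point y ∈ P ∩ Z^n satisfies y ∈ {−1, 0, 1}^n. -/
/-- Left-hand side `Σ_{i<j} x_i/2^{i} + x_j + Σ_{i>j} x_i/2^{i-1}` (1-based indices in the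
paper, 0-based here). -/
noncomputable def lhsJ {n : ℕ} (j : Fin n) (x : Fin n → ℝ) : ℝ :=
  (∑ i ∈ Finset.univ.filter (fun i => i < j), x i / 2 ^ (i.val + 1)) + x j +
    ∑ i ∈ Finset.univ.filter (fun i => j < i), x i / 2 ^ i.val

/-- Left-hand side `−x_{ℓ_N}/|N| + Σ_{i∈N, i≠ℓ_N} x_i/|N| − Σ_{i∉N} x_i/|N|^n` where
`ℓ_N = min N`. -/
noncomputable def lhsN {n : ℕ} (N : Finset (Fin n)) (h : N.Nonempty) (x : Fin n → ℝ) : ℝ :=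
  -x (N.min' h) / (N.card : ℝ) + (∑ i ∈ N.erase (N.min' h), x i / (N.card : ℝ)) -
    ∑ i ∈ Nᶜ, x i / (N.card : ℝ) ^ n

/-- Membership in the lower-bound polytope `P`. -/
def inLB {n : ℕ} (x : Fin n → ℝ) : Prop :=
  (∀ j : Fin n, |lhsJ j x| ≤ 1) ∧
    ∀ N : Finset (Fin n), ∀ h : 2 ≤ N.card,
      |lhsN N (Finset.card_pos.mp (lt_of_lt_of_le (by norm_num) h)) x| ≤ 1

private lemma geom_half (m : ℕ) :
    ∑ j ∈ Finset.range m, ((1:ℝ)/2)^j = 2 - 2*((1:ℝ)/2)^m := by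
  induction m with
  | zero => norm_num
  | succ m ih => rw [Finset.sum_range_succ, ih]; ring

private lemma sum_filter_lt_eq {n : ℕ} (k : Fin n) (f : ℕ → ℝ) :
    ∑ i ∈ Finset.univ.filter (fun i : Fin n => i < k), f i.val
      = ∑ j ∈ Finset.range k.val, f j := by
  refine Finset.sum_bij' (fun i _ => i.val)
    (fun j hj => ⟨j, lt_trans (Finset.mem_range.mp hj) k.isLt⟩) ?_ ?_ ?_ ?_ ?_
  · intro a ha
    simp only [Finset.mem_filter, Finset.mem_univ, true_and] at ha
    exact Finset.mem_range.mpr ha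
  · intro a ha
    simp only [Finset.mem_filter, Finset.mem_univ, true_and]
    exact Finset.mem_range.mp ha
  · intro a _; rfl
  · intro a _; rfl
  · intro a _; rfl

private lemma sum_filter_gt_eq {n : ℕ} (k : Fin n) (f : ℕ → ℝ) :
    ∑ i ∈ Finset.univ.filter (fun i : Fin n => k < i), f i.val
      = ∑ j ∈ Finset.Ico (k.val + 1) n, f j := by
  refine Finset.sum_bij' (fun i _ => i.val)
    (fun j hj => ⟨j, (Finset.mem_Ico.mp hj).2⟩) ?_ ?_ ?_ ?_ ?_
  · intro a ha
    simp only [Finset.mem_filter, Finset.mem_univ, true_and] at ha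
    exact Finset.mem_Ico.mpr ⟨ha, a.isLt⟩
  · intro a ha
    simp only [Finset.mem_filter, Finset.mem_univ, true_and]
    exact (Finset.mem_Ico.mp ha).1
  · intro a _; rfl
  · intro a _; rfl
  · intro a _; rfl

private lemma aux8 : ∀ m : ℕ, 8 * m ≤ 2 ^ (m + 2) := by
  intro m
  induction m with
  | zero => simp
  | succ m ih =>
    have h4 : 4 ≤ 2 ^ (m + 2) := by
      calc 4 = 2 ^ 2 := rfl
        _ ≤ 2 ^ (m + 2) := Nat.pow_le_pow_right (by norm_num) (by omega)
    have h2 : 2 ^ (m + 1 + 2) = 2 * 2 ^ (m + 2) := by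
      rw [show m + 1 + 2 = (m + 2) + 1 from rfl, pow_succ]; ring
    omega

/-- Pair constraint estimate: for `a < b`, `|x b - x a| ≤ 2 + 2 (n-2) B / 2^n`. -/
private lemma pair_est {n : ℕ} {x : Fin n → ℝ} (hx : inLB x) {B : ℝ}
    (hB : ∀ j, |x j| ≤ B) {a b : Fin n} (hab : a < b) :
    |x b - x a| ≤ 2 + 2 * (((n - 2 : ℕ) : ℝ) * B / 2 ^ n) := by
  classical
  set N : Finset (Fin n) := insert a {b} with hN
  have hanb : a ∉ ({b} : Finset (Fin n)) := by simp [hab.ne]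
  have hcard : N.card = 2 := by
    rw [hN, Finset.card_insert_of_notMem hanb, Finset.card_singleton]
  have hmin : ∀ h : N.Nonempty, N.min' h = a := by
    intro h
    refine le_antisymm (Finset.min'_le _ _ (by simp [hN])) (Finset.le_min' _ _ _ ?_)
    intro c hc
    rcases Finset.mem_insert.mp hc with rfl | hc
    · exact le_refl _
    · rw [Finset.mem_singleton] at hc; subst hc; exact hab.le
  have key := hx.2 N (by rw [hcard])
  rw [lhsN] at key
  rw [hmin, hN, Finset.erase_insert hanb, Finset.sum_singleton, ← hN, hcard] at key
  push_cast at key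
  set T : ℝ := ∑ i ∈ Nᶜ, x i / (2:ℝ) ^ n with hT
  have hB0 : 0 ≤ B := le_trans (abs_nonneg _) (hB a)
  have hTb : |T| ≤ ((n - 2 : ℕ) : ℝ) * B / 2 ^ n := by
    calc |T| ≤ ∑ i ∈ Nᶜ, |x i / (2:ℝ) ^ n| := Finset.abs_sum_le_sum_abs _ _
      _ ≤ ∑ _i ∈ Nᶜ, B / (2:ℝ) ^ n := by
          refine Finset.sum_le_sum fun i _ => ?_
          rw [abs_div, abs_pow, abs_two]
          gcongr
          exact hB i
      _ = (Nᶜ.card : ℝ) * (B / 2 ^ n) := by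
          rw [Finset.sum_const, nsmul_eq_mul]
      _ = ((n - 2 : ℕ) : ℝ) * B / 2 ^ n := by
          rw [Finset.card_compl, Fintype.card_fin, hcard]
          ring
  have h1 := abs_le.mp key
  have h2 := abs_le.mp hTb
  clear_value T
  rw [abs_le]
  constructor
  · linarith [h1.1, h1.2, h2.1, h2.2]
  · linarith [h1.1, h1.2, h2.1, h2.2]

theorem stmt_9 {n : ℕ} (hn : 1 ≤ n) (y : Fin n → ℤ)
    (hy : inLB (fun i => (y i : ℝ))) :
    ∀ i, y i = -1 ∨ y i = 0 ∨ y i = 1 := by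
  classical
  set x : Fin n → ℝ := fun i => (y i : ℝ) with hxdef
  have hne : (Finset.univ : Finset (Fin n)).Nonempty := ⟨⟨0, hn⟩, Finset.mem_univ _⟩
  set B := Finset.univ.sup' hne (fun i => |x i|) with hBdef
  have hB : ∀ i, |x i| ≤ B := by
    intro i
    rw [hBdef]
    exact Finset.le_sup' (fun i => |x i|) (Finset.mem_univ i)
  obtain ⟨k, -, hk⟩ := Finset.exists_mem_eq_sup' hne (fun i => |x i|)
  rw [← hBdef] at hk
  have hB0 : 0 ≤ B := le_trans (abs_nonneg _) (hB k)
  have hp : (0:ℝ) < 2 ^ n := by positivity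
  have hB1 : B ≤ 1 := by
    by_contra hcon
    push_neg at hcon
    have hyk1 : (1:ℤ) < |y k| := by
      rw [hk] at hcon
      have : (1:ℝ) < ((|y k| : ℤ) : ℝ) := by rw [Int.cast_abs]; exact hcon
      exact_mod_cast this
    have h2B : (2:ℝ) ≤ B := by
      rw [hk]
      have h2 : (2:ℤ) ≤ |y k| := by omega
      calc (2:ℝ) = ((2:ℤ) : ℝ) := by norm_num
        _ ≤ ((|y k| : ℤ) : ℝ) := by exact_mod_cast h2
        _ = |x k| := by rw [Int.cast_abs]
    set t : ℝ := 2 / 2 ^ n with htdef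
    set u : ℝ := ((n - 2 : ℕ) : ℝ) with hudef
    set D : ℝ := 2 + 2 * (u * B / 2 ^ n) with hDdef
    have hpair : ∀ i, i ≠ k → |x k - x i| ≤ D := by
      intro i hik
      rcases lt_or_gt_of_ne hik with h | h
      · exact pair_est hy hB h
      · rw [abs_sub_comm]; exact pair_est hy hB h
    have hlow : ∀ i, i ≠ k → x k - D ≤ x i := by
      intro i h
      have := (abs_le.mp (hpair i h)).2
      linarith
    have hup : ∀ i, i ≠ k → x i ≤ x k + D := by
      intro i h
      have := (abs_le.mp (hpair i h)).1
      linarith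
    have hJ := hy.1 k
    rw [lhsJ] at hJ
    set S1 := ∑ i ∈ Finset.univ.filter (fun i : Fin n => i < k), x i / 2 ^ (i.val + 1) with hS1
    set S2 := ∑ i ∈ Finset.univ.filter (fun i : Fin n => k < i), x i / 2 ^ i.val with hS2
    set A1 := ∑ i ∈ Finset.univ.filter (fun i : Fin n => i < k), ((1:ℝ)/2) ^ (i.val + 1) with hA1
    set A2 := ∑ i ∈ Finset.univ.filter (fun i : Fin n => k < i), ((1:ℝ)/2) ^ i.val with hA2
    have hA1v : A1 = 1 - ((1:ℝ)/2) ^ k.val := by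
      rw [hA1, sum_filter_lt_eq k (fun j => ((1:ℝ)/2) ^ (j + 1))]
      have : ∑ j ∈ Finset.range k.val, ((1:ℝ)/2) ^ (j + 1)
          = (∑ j ∈ Finset.range k.val, ((1:ℝ)/2) ^ j) * (1/2) := by
        rw [Finset.sum_mul]
        exact Finset.sum_congr rfl fun j _ => pow_succ _ _
      rw [this, geom_half]; ring
    have hA2v : A2 = 2 * ((1:ℝ)/2) ^ (k.val + 1) - 2 * ((1:ℝ)/2) ^ n := by
      rw [hA2, sum_filter_gt_eq k (fun j => ((1:ℝ)/2) ^ j),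
        Finset.sum_Ico_eq_sub _ (by exact k.isLt : k.val + 1 ≤ n), geom_half, geom_half]
      ring
    have hhalf : ((1:ℝ)/2) ^ n = 1 / 2 ^ n := by rw [div_pow, one_pow]
    have hAv : A1 + A2 = 1 - t := by
      rw [hA1v, hA2v, htdef, hhalf]; ring
    have hS1low : (x k - D) * A1 ≤ S1 := by
      rw [hA1, Finset.mul_sum]
      refine Finset.sum_le_sum fun i hi => ?_
      have hik : i ≠ k := ne_of_lt (Finset.mem_filter.mp hi).2
      have h1 : x k - D ≤ x i := hlow i hik
      rw [div_pow, one_pow, mul_one_div]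
      gcongr
    have hS1up : S1 ≤ (x k + D) * A1 := by
      rw [hA1, Finset.mul_sum]
      refine Finset.sum_le_sum fun i hi => ?_
      have hik : i ≠ k := ne_of_lt (Finset.mem_filter.mp hi).2
      have h1 : x i ≤ x k + D := hup i hik
      rw [div_pow, one_pow, mul_one_div]
      gcongr
    have hS2low : (x k - D) * A2 ≤ S2 := by
      rw [hA2, Finset.mul_sum]
      refine Finset.sum_le_sum fun i hi => ?_
      have hik : i ≠ k := (ne_of_lt (Finset.mem_filter.mp hi).2).symm
      have h1 : x k - D ≤ x i := hlow i hik
      rw [div_pow, one_pow, mul_one_div]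
      gcongr
    have hS2up : S2 ≤ (x k + D) * A2 := by
      rw [hA2, Finset.mul_sum]
      refine Finset.sum_le_sum fun i hi => ?_
      have hik : i ≠ k := (ne_of_lt (Finset.mem_filter.mp hi).2).symm
      have h1 : x i ≤ x k + D := hup i hik
      rw [div_pow, one_pow, mul_one_div]
      gcongr
    have habs := abs_le.mp hJ
    have hup' : x k + (x k - D) * (1 - t) ≤ 1 := by
      rw [← hAv, mul_add]
      linarith [habs.2]
    have hlow' : -1 ≤ x k + (x k + D) * (1 - t) := by
      rw [← hAv, mul_add]
      linarith [habs.1]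
    have hxkcase : x k = B ∨ x k = -B := (abs_eq hB0).mp hk.symm
    have hmain : B + (B - D) * (1 - t) ≤ 1 := by
      rcases hxkcase with h | h
      · rw [h] at hup'; exact hup'
      · rw [h] at hlow'; nlinarith [hlow']
    have ht0 : (0:ℝ) < t := by rw [htdef]; positivity
    have ht1 : t ≤ 1 := by
      rw [htdef, div_le_one hp]
      calc (2:ℝ) = 2 ^ 1 := (pow_one 2).symm
        _ ≤ 2 ^ n := pow_le_pow_right₀ one_le_two hn
    have hu0 : (0:ℝ) ≤ u := Nat.cast_nonneg _
    have hut : u * t ≤ 1/4 := by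
      have hnat : 8 * (n - 2) ≤ 2 ^ n := by
        rcases le_or_gt 2 n with h | h
        · have e : n - 2 + 2 = n := by omega
          have := aux8 (n - 2)
          rwa [e] at this
        · have e : n - 2 = 0 := by omega
          simp [e]
      have h8 : 8 * u ≤ (2:ℝ) ^ n := by
        rw [hudef]
        exact_mod_cast hnat
      rw [htdef, ← mul_div_assoc, div_le_iff₀ hp]
      linarith
    have hDe : D = 2 + u * B * t := by rw [hDdef, htdef]; ring
    rw [hDe] at hmain
    clear_value x B t u D S1 S2 A1 A2
    have e2 : (0:ℝ) ≤ u*t*t := mul_nonneg (mul_nonneg hu0 ht0.le) ht0.le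
    have hc2 : (0:ℝ) ≤ 2 - t - u*t + u*t*t := by linarith
    have e1 : (0:ℝ) ≤ (B - 2) * (2 - t - u*t + u*t*t) :=
      mul_nonneg (by linarith) hc2
    linarith [e1, e2, hmain, hut]
  intro i
  have h1 : |x i| ≤ 1 := le_trans (hB i) hB1
  have h2 : |y i| ≤ 1 := by
    have : ((|y i| : ℤ) : ℝ) ≤ 1 := by rw [Int.cast_abs]; exact h1
    exact_mod_cast this
  have := abs_le.mp h2
  omega
end

section
/- Let P ⊂ R^n be the lower-bound polytope defined by inequalities (for j = 1,…,n) ±(Σ_{i<j} x_i/2^i + x_j + Σ_{i>j} x_i/2^{i−1}) ≤ 1 and (for each N ⊆ {1,…,n} with |N| ≥ 2) ±(−x_{ℓ_N}/|N| + Σ_{i∈N,i≠ℓ_N} x_i/|N| − Σ_{i∉N} x_i/|N|^n) ≤ 1. A point y ∈ {−1,0,1}^n lies in P if and only if: y = 0, or y_{ℓ(y)} = 1 and y_i ∈ {−1,0} for all i > ℓ(y), or y_{ℓ(y)} = −1 and y_i ∈ {0,1} for all i > ℓ(y). -/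
/-!
Write `lhsJ j x = ∑ i, x i * 2⁻¹ ^ e_j(i)` with `e_j(j) = 0`. Past any index `l`, the exponents
`e_j(i)` (`i > l`, `i ≠ j`) are distinct and larger than `e_j(l)`, so the weight of `x l` strictly
dominates the total weight of the later coordinates other than `x j`. Hence if the leading nonzero
entry is `x l = 1`, a later entry `x m = 1` makes `lhsJ m x > 1`; conversely, if all later entries
are `≤ 0` (and `≥ -1`), every `lhsJ` constraint holds. The `lhsN` constraints hold for such `x`
because `n - |N| ≤ |N| ^ (n - 1)` makes the coordinates outside `N` contribute at most `1 / |N|`,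
and a case split on the position of `min N` relative to `l` fixes the signs of the rest.
A leading entry `-1` is handled by the symmetry `x ↦ -x` of the polytope.
-/

open Finset

theorem sum_inv_two_pow_lt {E : Finset ℕ} {a : ℕ} (h : ∀ e ∈ E, a < e) :
    ∑ e ∈ E, (2⁻¹ : ℝ) ^ e < 2⁻¹ ^ a := by
  set M := a + 1 + E.sup id
  have hE : E ⊆ Ico (a + 1) M := fun e he =>
    mem_Ico.2 ⟨h e he, by have := le_sup (f := id) he; simp only [id] at this; omega⟩
  calc ∑ e ∈ E, (2⁻¹ : ℝ) ^ e ≤ ∑ e ∈ Ico (a + 1) M, (2⁻¹ : ℝ) ^ e :=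
        sum_le_sum_of_subset_of_nonneg hE fun _ _ _ => by positivity
    _ = 2⁻¹ ^ a - 2 * 2⁻¹ ^ M := by
        rw [geom_sum_Ico' (by norm_num) (by omega), pow_succ]; ring
    _ < 2⁻¹ ^ a := by linarith [show (0 : ℝ) < 2⁻¹ ^ M by positivity]

variable {n : ℕ}

def expJ (j i : Fin n) : ℕ := if i < j then i + 1 else if j < i then i else 0

theorem lhsJ_eq_sum (j : Fin n) (x : Fin n → ℝ) :
    lhsJ j x = ∑ i, x i * 2⁻¹ ^ expJ j i := by
  rw [lhsJ, sum_filter, sum_filter, ← Fintype.sum_ite_eq' j x, ← sum_add_distrib,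
    ← sum_add_distrib]
  refine sum_congr rfl fun i _ => ?_
  rcases lt_trichotomy i j with h | rfl | h
  · simp [expJ, h, h.not_gt, h.ne, div_eq_mul_inv]
  · simp [expJ]
  · simp [expJ, h, h.not_gt, h.ne', div_eq_mul_inv]

theorem expJ_lt_expJ {j l i : Fin n} (hli : l < i) (hij : i ≠ j) : expJ j l < expJ j i := by
  rw [Fin.lt_def] at hli
  rw [Ne, Fin.ext_iff] at hij
  simp only [expJ, Fin.lt_def]
  split_ifs <;> omega

theorem expJ_injOn (j : Fin n) : Set.InjOn (expJ j) {i | i ≠ j} := by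
  intro i hi i' hi' h
  rcases lt_trichotomy i i' with hlt | heq | hlt
  · exact absurd h (expJ_lt_expJ hlt hi').ne
  · exact heq
  · exact absurd h (expJ_lt_expJ hlt hi).ne'

theorem sum_Ioi_erase_inv_two_pow_expJ_lt (j l : Fin n) :
    ∑ i ∈ (Ioi l).erase j, (2⁻¹ : ℝ) ^ expJ j i < 2⁻¹ ^ expJ j l := by
  rw [← sum_image fun i hi i' hi' => expJ_injOn j (ne_of_mem_erase hi) (ne_of_mem_erase hi')]
  refine sum_inv_two_pow_lt fun e he => ?_
  obtain ⟨i, hi, rfl⟩ := mem_image.1 he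
  exact expJ_lt_expJ (mem_Ioi.1 (mem_of_mem_erase hi)) (ne_of_mem_erase hi)

theorem lhsJ_eq_of_lead {x : Fin n → ℝ} {l : Fin n} (h0 : ∀ i < l, x i = 0) (j : Fin n) :
    lhsJ j x = x l * 2⁻¹ ^ expJ j l + (if l < j then x j else 0) +
      ∑ i ∈ (Ioi l).erase j, x i * 2⁻¹ ^ expJ j i := by
  have hIci : ∑ i, x i * (2⁻¹ : ℝ) ^ expJ j i = ∑ i ∈ Ici l, x i * 2⁻¹ ^ expJ j i :=
    (sum_subset (subset_univ _) fun i _ hi => by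
      rw [h0 i (by simpa using hi), zero_mul]).symm
  rw [lhsJ_eq_sum, hIci, ← add_sum_Ioi_eq_sum_Ici, add_assoc]
  congr 1
  split_ifs with hlj
  · rw [← add_sum_erase _ _ (mem_Ioi.2 hlj), expJ, if_neg (lt_irrefl j), if_neg (lt_irrefl j),
      pow_zero, mul_one]
  · rw [erase_eq_of_notMem (by simpa using hlj), zero_add]

theorem abs_sum_div_le_card_div {ι : Type*} (s : Finset ι) {x : ι → ℝ}
    (hx : ∀ i ∈ s, |x i| ≤ 1) {d : ℝ} (hd : 0 < d) : |∑ i ∈ s, x i / d| ≤ s.card / d := by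
  rw [← sum_div, abs_div, abs_of_pos hd]
  gcongr
  exact (abs_sum_le_sum_abs _ _).trans (by simpa using sum_le_sum hx)

theorem card_compl_div_pow_le {N : Finset (Fin n)} (hN : 2 ≤ N.card) :
    (Nᶜ.card : ℝ) / (N.card : ℝ) ^ n ≤ 1 / N.card := by
  have hcn : N.card ≤ n := by simpa using card_le_univ N
  obtain ⟨k, rfl⟩ : ∃ k, n = k + 1 := ⟨n - 1, by omega⟩
  have hpow : k < N.card ^ k := Nat.lt_two_pow_self.trans_le (Nat.pow_le_pow_left hN _)
  have hnat : Nᶜ.card * N.card ≤ N.card ^ (k + 1) := by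
    rw [card_compl, Fintype.card_fin, pow_succ]
    gcongr
    omega
  rw [div_le_div_iff₀ (by positivity) (by positivity), one_mul]
  exact_mod_cast hnat

theorem abs_lhsN_le_one_of_lead {x : Fin n → ℝ} {l : Fin n} (h0 : ∀ i < l, x i = 0)
    (hl : x l = 1) (htail : ∀ i, l < i → x i ∈ Set.Icc (-1) 0) {N : Finset (Fin n)}
    (hN : 2 ≤ N.card) (hne : N.Nonempty) : |lhsN N hne x| ≤ 1 := by
  have hx : ∀ i, |x i| ≤ 1 := by
    intro i
    rcases lt_trichotomy i l with h | rfl | h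
    · simp [h0 i h]
    · simp [hl]
    · exact abs_le.2 ⟨(htail i h).1, (htail i h).2.trans zero_le_one⟩
  rw [lhsN, abs_le]
  set m := N.min' hne
  set c : ℝ := (N.card : ℝ)
  have hc : (2 : ℝ) ≤ c := by simp only [c]; exact_mod_cast hN
  have hB : |∑ i ∈ N.erase m, x i / c| ≤ (c - 1) / c := by
    convert abs_sum_div_le_card_div _ (fun i _ => hx i) (by positivity : 0 < c) using 2
    rw [card_erase_of_mem (min'_mem N hne), Nat.cast_sub (by omega), Nat.cast_one]
  have hD : |∑ i ∈ Nᶜ, x i / c ^ n| ≤ 1 / c :=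
    (abs_sum_div_le_card_div _ (fun i _ => hx i) (by positivity)).trans
      (card_compl_div_pow_le hN)
  have hB_nonpos : l ≤ m → ∑ i ∈ N.erase m, x i / c ≤ 0 := fun hlm =>
    sum_nonpos fun i hi => div_nonpos_of_nonpos_of_nonneg
      (htail i (hlm.trans_lt (min'_lt_of_mem_erase_min' N hne hi))).2 (by positivity)
  have hsplit : (c - 1) / c + 1 / c = 1 := by field_simp; ring
  have hB' := abs_le.1 hB
  have hD' := abs_le.1 hD
  rcases lt_trichotomy m l with hml | hml | hml
  · rw [h0 m hml, neg_zero, zero_div]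
    constructor <;> linarith
  · have hD_nonpos : ∑ i ∈ Nᶜ, x i / c ^ n ≤ 0 := sum_nonpos fun i hi => by
      have hil : i ≠ l := fun h => (mem_compl.1 hi) (h ▸ hml ▸ min'_mem N hne)
      rcases lt_or_gt_of_ne hil with h | h
      · simp [h0 i h]
      · exact div_nonpos_of_nonpos_of_nonneg (htail i h).2 (by positivity)
    have := hB_nonpos hml.ge
    rw [show x m = 1 from hml ▸ hl, neg_div]
    constructor <;> linarith
  · have hxm := htail m hml
    have := hB_nonpos hml.le
    have h1 : -x m / c ≤ 1 / c := by gcongr; linarith [hxm.1]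
    have h2 : 0 ≤ -x m / c := div_nonneg (by linarith [hxm.2]) (by positivity)
    have h3 : 1 / c ≤ 1 / 2 := by gcongr
    constructor <;> linarith

theorem lhsJ_gt_of_lead {x : Fin n → ℝ} {l : Fin n} (h0 : ∀ i < l, x i = 0) (hl : x l = 1)
    (htail : ∀ i, l < i → -1 ≤ x i) (j : Fin n) : (if l < j then x j else 0) < lhsJ j x := by
  have hT : -∑ i ∈ (Ioi l).erase j, (2⁻¹ : ℝ) ^ expJ j i ≤
      ∑ i ∈ (Ioi l).erase j, x i * 2⁻¹ ^ expJ j i := by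
    rw [← sum_neg_distrib]
    refine sum_le_sum fun i hi => ?_
    have := htail i (mem_Ioi.1 (mem_of_mem_erase hi))
    nlinarith [show (0 : ℝ) < 2⁻¹ ^ expJ j i by positivity]
  rw [lhsJ_eq_of_lead h0, hl, one_mul]
  linarith [sum_Ioi_erase_inv_two_pow_expJ_lt j l]

theorem lhsJ_le_one_of_lead {x : Fin n → ℝ} {l : Fin n} (h0 : ∀ i < l, x i = 0) (hl : x l = 1)
    (htail : ∀ i, l < i → x i ≤ 0) (j : Fin n) : lhsJ j x ≤ 1 := by
  have hj : (if l < j then x j else 0) ≤ 0 := by split_ifs with h; exacts [htail j h, le_rfl]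
  have hT : ∑ i ∈ (Ioi l).erase j, x i * (2⁻¹ : ℝ) ^ expJ j i ≤ 0 :=
    sum_nonpos fun i hi =>
    mul_nonpos_of_nonpos_of_nonneg (htail i (mem_Ioi.1 (mem_of_mem_erase hi))) (by positivity)
  have hw : (2⁻¹ : ℝ) ^ expJ j l ≤ 1 := pow_le_one₀ (by norm_num) (by norm_num)
  rw [lhsJ_eq_of_lead h0, hl, one_mul]
  linarith

theorem inLB_of_lead {x : Fin n → ℝ} {l : Fin n} (h0 : ∀ i < l, x i = 0) (hl : x l = 1)
    (htail : ∀ i, l < i → x i ∈ Set.Icc (-1) 0) : inLB x := by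
  refine ⟨fun j => abs_le.2 ⟨?_, lhsJ_le_one_of_lead h0 hl (fun i hi => (htail i hi).2) j⟩,
    fun N hN => abs_lhsN_le_one_of_lead h0 hl htail hN _⟩
  have hj : -1 ≤ if l < j then x j else 0 := by
    split_ifs with h; exacts [(htail j h).1, by norm_num]
  linarith [lhsJ_gt_of_lead h0 hl (fun i hi => (htail i hi).1) j]

theorem inLB_neg {x : Fin n → ℝ} : (inLB fun i => -x i) ↔ inLB x := by
  have hJ (j : Fin n) : lhsJ j (fun i => -x i) = -lhsJ j x := by
    simp only [lhsJ_eq_sum, neg_mul, sum_neg_distrib]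
  have hN (N : Finset (Fin n)) (hne : N.Nonempty) : lhsN N hne (fun i => -x i) = -lhsN N hne x := by
    simp only [lhsN, neg_div, sum_neg_distrib]
    ring
  simp only [inLB, hJ, hN, abs_neg]

theorem exists_forall_lt_eq_zero_and_ne_zero {α M : Type*} [LT α] [WellFoundedLT α] [Zero M]
    {y : α → M} (hy : y ≠ 0) : ∃ l, (∀ i < l, y i = 0) ∧ y l ≠ 0 := by
  obtain ⟨l, hl, hmin⟩ := wellFounded_lt.has_min {i | y i ≠ 0} (Function.ne_iff.1 hy)
  exact ⟨l, fun i hi => not_not.1 fun h => hmin i h hi, hl⟩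

section IntCast

variable {y : Fin n → ℤ} {l : Fin n}

theorem tail_of_inLB_intCast (hy : ∀ i, y i = -1 ∨ y i = 0 ∨ y i = 1)
    (h : inLB fun i => (y i : ℝ)) (h0 : ∀ i < l, y i = 0) (hl : y l = 1) {m : Fin n}
    (hlm : l < m) : y m = -1 ∨ y m = 0 := by
  have hlt : (y m : ℝ) < 1 := by
    have := lhsJ_gt_of_lead (x := fun i => (y i : ℝ)) (by simpa using h0) (by simp [hl])
      (fun i _ => by rcases hy i with h | h | h <;> simp [h]) m
    rw [if_pos hlm] at this
    linarith [(abs_le.1 (h.1 m)).2]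
  have := hy m
  have : y m < 1 := by exact_mod_cast hlt
  omega

theorem inLB_intCast_of_lead (h0 : ∀ i < l, y i = 0) (hl : y l = 1)
    (htail : ∀ i, l < i → y i = -1 ∨ y i = 0) : inLB fun i => (y i : ℝ) :=
  inLB_of_lead (by simpa using h0) (by simp [hl])
    (fun i hi => by rcases htail i hi with h | h <;> simp [h])

theorem inLB_intCast_neg : (inLB fun i => ((-y) i : ℝ)) ↔ inLB fun i => (y i : ℝ) := by
  simpa only [Pi.neg_apply, Int.cast_neg] using inLB_neg (x := fun i => (y i : ℝ))

end IntCast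

theorem stmt_10_general {n : ℕ} (y : Fin n → ℤ)
    (hy : ∀ i, y i = -1 ∨ y i = 0 ∨ y i = 1) :
    inLB (fun i => (y i : ℝ)) ↔
      (y = 0 ∨
        ∃ l : Fin n, (∀ i, i < l → y i = 0) ∧
          ((y l = 1 ∧ ∀ i, l < i → (y i = -1 ∨ y i = 0)) ∨
           (y l = -1 ∧ ∀ i, l < i → (y i = 0 ∨ y i = 1)))) := by
  have hy' : ∀ i, (-y) i = -1 ∨ (-y) i = 0 ∨ (-y) i = 1 := fun i => by
    have := hy i
    simp only [Pi.neg_apply]; omega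
  constructor
  · intro h
    by_cases h0 : y = 0
    · exact Or.inl h0
    obtain ⟨l, hlt, hl⟩ := exists_forall_lt_eq_zero_and_ne_zero h0
    refine Or.inr ⟨l, hlt, ?_⟩
    rcases hy l with h1 | h1 | h1
    · refine Or.inr ⟨h1, fun i hi => ?_⟩
      have := tail_of_inLB_intCast hy' (inLB_intCast_neg.2 h) (by simpa using hlt)
        (by simp [h1]) hi
      simp only [Pi.neg_apply] at this
      omega
    · exact absurd h1 hl
    · exact Or.inl ⟨h1, fun i hi => tail_of_inLB_intCast hy h hlt h1 hi⟩
  · rintro (rfl | ⟨l, hlt, ⟨h1, hgt⟩ | ⟨h1, hgt⟩⟩)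
    · simp [inLB, lhsJ, lhsN]
    · exact inLB_intCast_of_lead hlt h1 hgt
    · refine inLB_intCast_neg.1 (inLB_intCast_of_lead (l := l) (by simpa using hlt)
        (by simp [h1]) fun i hi => ?_)
      have := hgt i hi
      simp only [Pi.neg_apply]
      omega

theorem stmt_10 {n : ℕ} (hn : 1 ≤ n) (y : Fin n → ℤ)
    (hy : ∀ i, y i = -1 ∨ y i = 0 ∨ y i = 1) :
    inLB (fun i => (y i : ℝ)) ↔
      (y = 0 ∨
        ∃ l : Fin n, (∀ i, i < l → y i = 0) ∧
          ((y l = 1 ∧ ∀ i, l < i → (y i = -1 ∨ y i = 0)) ∨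
           (y l = -1 ∧ ∀ i, l < i → (y i = 0 ∨ y i = 1)))) :=
  stmt_10_general y hy
end

section
/- The only integer point in the interior of the lower-bound polytope P ⊂ R^n (with defining inequalities ±(Σ_{i<j} x_i/2^i + x_j + Σ_{i>j} x_i/2^{i−1}) ≤ 1 for j = 1,…,n and ±(−x_{ℓ_N}/|N| + Σ_{i∈N,i≠ℓ_N} x_i/|N| − Σ_{i∉N} x_i/|N|^n) ≤ 1 for each N ⊆ {1,…,n}, |N| ≥ 2) is the origin. -/
/-- Index of a defining inequality of the lower-bound polytope: a sign together with
either `j ∈ {1,…,n}` or `N ⊆ {1,…,n}` with `|N| ≥ 2`. -/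
abbrev LBIdx (n : ℕ) := (Fin n ⊕ {N : Finset (Fin n) // 2 ≤ N.card}) × Bool

/-- Left-hand side of the defining inequality of the lower-bound polytope with index `idx`
(each inequality reads `lbIneq idx x ≤ 1`). -/
noncomputable def lbIneq {n : ℕ} (idx : LBIdx n) (x : Fin n → ℝ) : ℝ :=
  match idx with
  | (Sum.inl j, b) => (if b then 1 else -1) * lhsJ j x
  | (Sum.inr N, b) =>
      (if b then 1 else -1) *
        lhsN N.1 (Finset.card_pos.mp (lt_of_lt_of_le (by norm_num) N.2)) x

/-
Write `u = Σ x_i / 2^i` for the first `j`-form. Subtracting `u / 2` from the `j`-th form leaves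
`x_j (1 - 2^{-j-1})` plus half the tail `Σ_{i>j} x_i / 2^i`, so downward induction on `j` bounds
every coordinate of an interior integer point by `2`. The forms for `N = {a, b}` then give
`|x_a - x_b| ≤ 2`; an entry `±2` would therefore force all entries to share its sign, which the
`j`-form at the first nonzero entry forbids. Hence `x ∈ {-1, 0, 1}ⁿ`. If the first nonzero entry
is `1` (up to the symmetry `x ↦ -x`), a later entry `1` makes its `j`-form at least `1`;
otherwise every other nonzero entry is `-1`, and the `N`-form on the support equals `-1`
(or, for a one-point support, the `j`-form there equals `1`).
-/

open Finset

lemma exists_ne_zero_forall_lt_eq_zero {α M : Type*} [LinearOrder α] [WellFoundedLT α] [Zero M]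
    {f : α → M} (hf : f ≠ 0) : ∃ l, f l ≠ 0 ∧ ∀ i < l, f i = 0 := by
  obtain ⟨i, hi⟩ := Function.ne_iff.mp hf
  obtain ⟨l, hl, hmin⟩ := wellFounded_lt.has_min {i | f i ≠ 0} ⟨i, hi⟩
  exact ⟨l, hl, fun i hil => by_contra fun h => hmin i h hil⟩

lemma sum_univ_eq_sum_Iio_add_add_sum_Ioi {α M : Type*} [Fintype α] [LinearOrder α]
    [LocallyFiniteOrderBot α] [LocallyFiniteOrderTop α] [AddCommMonoid M] (f : α → M) (j : α) :
    ∑ i, f i = ∑ i ∈ Iio j, f i + f j + ∑ i ∈ Ioi j, f i := by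
  rw [sum_Iio_add_eq_sum_Iic, ← sum_filter_add_sum_filter_not univ (· ≤ j)]
  congr 1 <;> apply sum_congr _ fun _ _ => rfl <;> ext <;> simp

lemma four_mul_sub_two_le_two_pow (n : ℕ) : 4 * (n - 2) ≤ 2 ^ n := by
  rcases Nat.lt_or_ge n 2 with h | h
  · simp [Nat.sub_eq_zero_of_le h.le]
  · obtain ⟨m, rfl⟩ := Nat.exists_eq_add_of_le' h
    have := m.lt_two_pow_self
    rw [pow_add]
    omega

lemma Nat.sum_Ioo_half_pow_succ {l k : ℕ} (h : l < k) :
    ∑ i ∈ Ioo l k, (1 / 2 : ℝ) ^ (i + 1) = (1 / 2) ^ (l + 1) - (1 / 2) ^ k := by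
  simp_rw [pow_succ, ← sum_mul]
  rw [← Ico_add_one_left_eq_Ioo, geom_sum_Ico' (m := l + 1) (by norm_num) h]
  ring

section

variable {n : ℕ}

lemma Fin.sum_Ioi_half_pow_le (j : Fin n) :
    ∑ i ∈ Ioi j, (1 / 2 : ℝ) ^ (i : ℕ) ≤ (1 / 2) ^ (j : ℕ) := by
  have hmap := sum_map (Ioi j) Fin.valEmbedding fun i => (1 / 2 : ℝ) ^ i
  simp only [Fin.map_valEmbedding_Ioi, ← Ico_add_one_left_eq_Ioo, Fin.valEmbedding_apply] at hmap
  rw [← hmap]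
  calc _ ≤ (1 / 2 : ℝ) ^ ((j : ℕ) + 1) / (1 - 1 / 2) :=
        geom_sum_Ico_le_of_lt_one (by norm_num) (by norm_num)
    _ = (1 / 2) ^ (j : ℕ) := by ring

lemma Fin.sum_Ioo_half_pow_succ {l k : Fin n} (h : l < k) :
    ∑ i ∈ Ioo l k, (1 / 2 : ℝ) ^ ((i : ℕ) + 1) = (1 / 2) ^ ((l : ℕ) + 1) - (1 / 2) ^ (k : ℕ) := by
  have hmap := sum_map (Ioo l k) Fin.valEmbedding fun i => (1 / 2 : ℝ) ^ (i + 1)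
  simp only [Fin.map_valEmbedding_Ioo, Fin.valEmbedding_apply] at hmap
  rw [← hmap]
  exact Nat.sum_Ioo_half_pow_succ h

lemma abs_sum_Ioi_div_two_pow_le {x : Fin n → ℝ} {c : ℝ} (j : Fin n) (hc : 0 ≤ c)
    (hx : ∀ i, j < i → |x i| ≤ c) :
    |∑ i ∈ Ioi j, x i / 2 ^ (i : ℕ)| ≤ c * (1 / 2) ^ (j : ℕ) :=
  calc |∑ i ∈ Ioi j, x i / 2 ^ (i : ℕ)| ≤ ∑ i ∈ Ioi j, |x i / 2 ^ (i : ℕ)| :=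
        abs_sum_le_sum_abs _ _
    _ ≤ ∑ i ∈ Ioi j, c * (1 / 2) ^ (i : ℕ) := sum_le_sum fun i hi => by
        rw [abs_div, abs_of_pos (by positivity : (0 : ℝ) < 2 ^ (i : ℕ)), one_div_pow, mul_one_div]
        gcongr
        exact hx i (mem_Ioi.1 hi)
    _ ≤ c * (1 / 2) ^ (j : ℕ) := by
        rw [← mul_sum]
        exact mul_le_mul_of_nonneg_left (Fin.sum_Ioi_half_pow_le j) hc

lemma abs_sum_div_two_pow_le_half {s : Finset (Fin n)} (hs : #s ≤ n - 2) {x : Fin n → ℝ}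
    (hx : ∀ i, |x i| ≤ 2) : |∑ i ∈ s, x i / 2 ^ n| ≤ 1 / 2 := by
  have hcard : (4 * #s : ℝ) ≤ 2 ^ n := by
    exact_mod_cast (Nat.mul_le_mul_left 4 hs).trans (four_mul_sub_two_le_two_pow n)
  calc |∑ i ∈ s, x i / 2 ^ n| ≤ ∑ i ∈ s, |x i / 2 ^ n| := abs_sum_le_sum_abs _ _
    _ ≤ ∑ _i ∈ s, 2 / (2 : ℝ) ^ n := sum_le_sum fun i _ => by
        rw [abs_div, abs_of_pos (by positivity : (0 : ℝ) < 2 ^ n)]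
        gcongr
        exact hx i
    _ = #s * 2 / 2 ^ n := by rw [sum_const, nsmul_eq_mul, mul_div_assoc]
    _ ≤ 1 / 2 := by
        rw [div_le_iff₀ (by positivity)]
        linarith

lemma lhsJ_eq (j : Fin n) (x : Fin n → ℝ) :
    lhsJ j x = ∑ i ∈ Iio j, x i / 2 ^ ((i : ℕ) + 1) + x j + ∑ i ∈ Ioi j, x i / 2 ^ (i : ℕ) := by
  simp only [lhsJ, filter_gt_eq_Iio, filter_lt_eq_Ioi]

lemma lhsJ_eq_of_forall_lt {j : Fin n} {x : Fin n → ℝ} (h : ∀ i < j, x i = 0) :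
    lhsJ j x = x j + ∑ i ∈ Ioi j, x i / 2 ^ (i : ℕ) := by
  rw [lhsJ_eq, sum_eq_zero fun i hi => by rw [h i (mem_Iio.1 hi), zero_div], zero_add]

lemma lhsJ_eq_half_lhsJ_zero_add (j : Fin n) (x : Fin n → ℝ) :
    lhsJ j x = lhsJ ⟨0, j.pos⟩ x / 2 + x j * (1 - (1 / 2) ^ ((j : ℕ) + 1)) +
      (∑ i ∈ Ioi j, x i / 2 ^ (i : ℕ)) / 2 := by
  have hIio : Iio (⟨0, j.pos⟩ : Fin n) = ∅ := by
    ext i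
    simp [Fin.lt_def]
  have hzero : lhsJ ⟨0, j.pos⟩ x = ∑ i, x i / 2 ^ (i : ℕ) := by
    rw [lhsJ_eq, sum_univ_eq_sum_Iio_add_add_sum_Ioi _ ⟨0, j.pos⟩, hIio]
    simp
  have hhalf : ∑ i ∈ Iio j, x i / 2 ^ ((i : ℕ) + 1) = (∑ i ∈ Iio j, x i / 2 ^ (i : ℕ)) / 2 := by
    rw [sum_div]
    exact sum_congr rfl fun i _ => by rw [pow_succ, div_div]
  rw [hzero, sum_univ_eq_sum_Iio_add_add_sum_Ioi _ j, lhsJ_eq, hhalf, one_div_pow, pow_succ]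
  field_simp
  ring

lemma lhsJ_neg (j : Fin n) (x : Fin n → ℝ) : lhsJ j (-x) = -lhsJ j x := by
  simp only [lhsJ, Pi.neg_apply, neg_div, sum_neg_distrib]
  ring

lemma lhsN_neg (N : Finset (Fin n)) (h : N.Nonempty) (x : Fin n → ℝ) :
    lhsN N h (-x) = -lhsN N h x := by
  simp only [lhsN, Pi.neg_apply, neg_div, sum_neg_distrib, neg_neg]
  ring

lemma lhsN_pair {a b : Fin n} (hab : a < b) (h : ({a, b} : Finset (Fin n)).Nonempty)
    (x : Fin n → ℝ) : lhsN {a, b} h x = (x b - x a) / 2 - ∑ i ∈ {a, b}ᶜ, x i / 2 ^ n := by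
  have hmin : ({a, b} : Finset (Fin n)).min' h = a := by simp [hab.le]
  rw [lhsN, hmin, erase_insert (by simpa using hab.ne), sum_singleton, card_pair hab.ne]
  push_cast
  ring

lemma lhsN_eq_neg_one {N : Finset (Fin n)} (h : N.Nonempty) {x : Fin n → ℝ} {l : Fin n}
    (hl : l ∈ N) (hle : ∀ i ∈ N, l ≤ i) (hout : ∀ i ∉ N, x i = 0) (hxl : x l = 1)
    (hrest : ∀ i ∈ N, i ≠ l → x i = -1) : lhsN N h x = -1 := by
  have hmin : N.min' h = l := le_antisymm (min'_le N l hl) (le_min' N h l hle)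
  have hcard : (#N : ℝ) ≠ 0 := by exact_mod_cast h.card_pos.ne'
  have herase : ∑ i ∈ N.erase l, x i / #N = (#N - 1) * (-1 / #N) := by
    rw [sum_congr rfl fun i hi => by rw [hrest i (mem_of_mem_erase hi) (ne_of_mem_erase hi)],
      sum_const, card_erase_of_mem hl, nsmul_eq_mul, Nat.cast_sub h.card_pos, Nat.cast_one]
  rw [lhsN, hmin, herase, hxl, sum_eq_zero fun i hi => by rw [hout i (mem_compl.1 hi), zero_div]]
  field_simp
  ring

def IsInteriorLB (x : Fin n → ℝ) : Prop :=
  (∀ j, |lhsJ j x| < 1) ∧ ∀ N (h : N.Nonempty), 2 ≤ #N → |lhsN N h x| < 1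

lemma isInteriorLB_iff_forall_lbIneq_lt_one {x : Fin n → ℝ} :
    IsInteriorLB x ↔ ∀ idx : LBIdx n, lbIneq idx x < 1 := by
  simp only [IsInteriorLB, abs_lt, Prod.forall, Sum.forall, Subtype.forall, Bool.forall_bool,
    lbIneq, Bool.false_eq_true, if_false, if_true, neg_one_mul, one_mul]
  exact and_congr (forall_congr' fun _ => and_congr_left' neg_lt.symm)
    ⟨fun h N h2 => (h N _ h2).imp_left neg_lt.2, fun h N _ h2 => (h N h2).imp_left neg_lt.1⟩

lemma IsInteriorLB.neg {x : Fin n → ℝ} (hx : IsInteriorLB x) : IsInteriorLB (-x) :=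
  ⟨fun j => by rw [lhsJ_neg, abs_neg]; exact hx.1 j,
    fun N h hN => by rw [lhsN_neg, abs_neg]; exact hx.2 N h hN⟩

lemma isInteriorLB_zero : IsInteriorLB (0 : Fin n → ℝ) := by
  simp [IsInteriorLB, lhsJ, lhsN]

lemma IsInteriorLB.abs_lt_three {x : Fin n → ℝ} (hx : IsInteriorLB x) (j : Fin n)
    (htail : ∀ i, j < i → |x i| ≤ 2) : |x j| < 3 := by
  have hT := abs_sum_Ioi_div_two_pow_le j zero_le_two htail
  set T := ∑ i ∈ Ioi j, x i / 2 ^ (i : ℕ)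
  rcases Nat.eq_zero_or_pos j with hj | hj
  · have hxj : x j = lhsJ j x - T := by
      rw [lhsJ_eq_of_forall_lt fun i hi => absurd hi (by simp [Fin.lt_def, hj])]
      ring
    rw [hj, pow_zero, mul_one] at hT
    calc |x j| = |lhsJ j x - T| := by rw [hxj]
      _ ≤ |lhsJ j x| + |T| := abs_sub _ _
      _ < 3 := by linarith [hx.1 j]
  · set p : ℝ := (1 / 2) ^ (j : ℕ)
    have hp : p ≤ 1 / 2 := pow_le_of_le_one (by norm_num) (by norm_num) hj.ne'
    have hp0 : 0 < p := by positivity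
    have hid := lhsJ_eq_half_lhsJ_zero_add j x
    rw [pow_succ] at hid
    have h0 := abs_lt.1 (hx.1 ⟨0, j.pos⟩)
    have hj1 := abs_lt.1 (hx.1 j)
    have hT' := abs_le.1 hT
    -- `|x j| (1 - p / 2) < 3 / 2 + p` with `p ≤ 1 / 2` rules out `|x j| ≥ 3`.
    rw [abs_lt]
    constructor <;> nlinarith

lemma half_pow_le_sum_Iio {x : Fin n → ℝ} {l k : Fin n} (hlk : l < k) (hzero : ∀ i < l, x i = 0)
    (hl : x l = 1) (hge : ∀ i, -1 ≤ x i) :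
    (1 / 2 : ℝ) ^ (k : ℕ) ≤ ∑ i ∈ Iio k, x i / 2 ^ ((i : ℕ) + 1) := by
  have hsplit : Iio k = Iio l ∪ insert l (Ioo l k) := by
    ext i
    simp only [mem_Iio, mem_union, mem_insert, mem_Ioo]
    constructor
    · intro hi
      rcases lt_trichotomy i l with h | h | h <;> simp [h, hi]
    · rintro (hi | rfl | ⟨-, hi⟩) <;> [exact hi.trans hlk; exact hlk; exact hi]
  have hdisj : Disjoint (Iio l) (insert l (Ioo l k)) := by
    simp only [disjoint_left, mem_Iio, mem_insert, mem_Ioo, not_or, not_and]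
    exact fun i hi => ⟨hi.ne, fun h => (lt_asymm hi h).elim⟩
  have hmid : -((1 / 2) ^ ((l : ℕ) + 1) - (1 / 2) ^ (k : ℕ)) ≤
      ∑ i ∈ Ioo l k, x i / 2 ^ ((i : ℕ) + 1) := by
    rw [← Fin.sum_Ioo_half_pow_succ hlk, ← sum_neg_distrib]
    exact sum_le_sum fun i _ => by
      rw [one_div_pow, ← neg_div]
      exact div_le_div_of_nonneg_right (hge i) (by positivity)
  have hbelow : ∑ i ∈ Iio l, x i / 2 ^ ((i : ℕ) + 1) = 0 :=
    sum_eq_zero fun i hi => by rw [hzero i (mem_Iio.1 hi), zero_div]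
  rw [hsplit, sum_union hdisj, hbelow, sum_insert (by simp), hl, ← one_div_pow]
  linarith

lemma one_le_lhsJ {x : Fin n → ℝ} {l k : Fin n} (hlk : l < k) (hzero : ∀ i < l, x i = 0)
    (hl : x l = 1) (hk : x k = 1) (hx : ∀ i, |x i| ≤ 1) : 1 ≤ lhsJ k x := by
  have hP := half_pow_le_sum_Iio hlk hzero hl fun i => (abs_le.1 (hx i)).1
  have hT := abs_le.1 (abs_sum_Ioi_div_two_pow_le k zero_le_one fun i _ => hx i)
  rw [lhsJ_eq, hk]
  linarith [hT.1]

section Integral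

variable {y : Fin n → ℤ}

lemma IsInteriorLB.intCast_neg (hy : IsInteriorLB fun i => (y i : ℝ)) :
    IsInteriorLB fun i => ((-y) i : ℝ) := by
  convert hy.neg using 1
  ext i
  simp

lemma IsInteriorLB.abs_le_two (hy : IsInteriorLB fun i => (y i : ℝ)) (j : Fin n) : |y j| ≤ 2 := by
  induction j using WellFoundedGT.induction with
  | _ j ih =>
    have h3 : |(y j : ℝ)| < 3 := hy.abs_lt_three j fun i hi => by exact_mod_cast ih i hi
    have : |y j| < 3 := by exact_mod_cast h3
    omega

lemma IsInteriorLB.abs_sub_le_two (hy : IsInteriorLB fun i => (y i : ℝ)) (a b : Fin n) :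
    |y a - y b| ≤ 2 := by
  wlog hab : a < b generalizing a b
  · rcases (not_lt.1 hab).lt_or_eq with hba | rfl
    · rw [abs_sub_comm]
      exact this b a hba
    · simp
  have hpair := hy.2 {a, b} (insert_nonempty _ _) (card_pair hab.ne).ge
  rw [lhsN_pair hab] at hpair
  have hC := abs_sum_div_two_pow_le_half (s := {a, b}ᶜ) (x := fun i => (y i : ℝ))
    (by rw [card_compl, Fintype.card_fin, card_pair hab.ne]) fun i => by
      exact_mod_cast hy.abs_le_two i
  have h3 : |(y a : ℝ) - y b| < 3 := by
    rw [abs_lt] at hpair ⊢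
    rw [abs_le] at hC
    constructor <;> linarith
  have : |y a - y b| < 3 := by exact_mod_cast h3
  omega

lemma IsInteriorLB.eq_zero_of_nonneg (hy : IsInteriorLB fun i => (y i : ℝ)) (hpos : 0 ≤ y) :
    y = 0 := by
  by_contra hy0
  obtain ⟨l, hl, hbelow⟩ := exists_ne_zero_forall_lt_eq_zero hy0
  have hJ := lhsJ_eq_of_forall_lt (j := l) (x := fun i => (y i : ℝ))
    fun i hi => by simp [hbelow i hi]
  have hT : 0 ≤ ∑ i ∈ Ioi l, (y i : ℝ) / 2 ^ (i : ℕ) :=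
    sum_nonneg fun i _ => div_nonneg (by exact_mod_cast hpos i) (by positivity)
  have hyl : (1 : ℝ) ≤ y l := by exact_mod_cast (show 1 ≤ y l by have : 0 ≤ y l := hpos l; omega)
  linarith [(abs_lt.1 (hy.1 l)).2]

lemma IsInteriorLB.abs_le_one (hy : IsInteriorLB fun i => (y i : ℝ)) (j : Fin n) : |y j| ≤ 1 := by
  by_contra hj
  wlog hj2 : y j = 2 generalizing y
  · have hneg : y j = -2 := by
      have := hy.abs_le_two j
      rw [abs_le] at this hj
      omega
    exact this hy.intCast_neg (by simpa using hj) (by simp [hneg])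
  have hpos : 0 ≤ y := fun i => show 0 ≤ y i by
    have := hy.abs_sub_le_two i j
    rw [abs_le] at this
    omega
  simp [hy.eq_zero_of_nonneg hpos] at hj2

lemma IsInteriorLB.ne_one_of_forall_lt_eq_zero (hy : IsInteriorLB fun i => (y i : ℝ)) {l : Fin n}
    (hbelow : ∀ i < l, y i = 0) : y l ≠ 1 := by
  intro hl
  set x : Fin n → ℝ := fun i => (y i : ℝ)
  have hzero : ∀ i < l, x i = 0 := fun i hi => by simp [x, hbelow i hi]
  have hx : ∀ i, |x i| ≤ 1 := fun i => show |(y i : ℝ)| ≤ 1 by exact_mod_cast hy.abs_le_one i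
  by_cases hk : ∃ k, l < k ∧ y k = 1
  · obtain ⟨k, hlk, hk⟩ := hk
    have := one_le_lhsJ hlk hzero (by simp [x, hl]) (by simp [x, hk]) hx
    linarith [(abs_lt.1 (hy.1 k)).2]
  push Not at hk
  have hval : ∀ i, l < i → y i = 0 ∨ y i = -1 := fun i hi => by
    have h1 := hy.abs_le_one i
    have h2 := hk i hi
    rw [abs_le] at h1
    omega
  by_cases hm : ∃ m, l < m ∧ y m = -1
  · obtain ⟨m, hlm, hm⟩ := hm
    set S := univ.filter fun i => y i ≠ 0
    have hlS : l ∈ S := by simp [S, hl]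
    have hS2 : 2 ≤ #S := one_lt_card.2 ⟨l, hlS, m, by simp [S, hm], hlm.ne⟩
    have hle : ∀ i ∈ S, l ≤ i := fun i hi =>
      le_of_not_gt fun h => (mem_filter.1 hi).2 (hbelow i h)
    have hS := lhsN_eq_neg_one (x := x) ⟨l, hlS⟩ hlS hle (fun i hi => by simpa [S, x] using hi)
      (by simp [x, hl]) fun i hi hil => by
        have := (hval i ((hle i hi).lt_of_ne' hil)).resolve_left (mem_filter.1 hi).2
        simp [x, this]
    linarith [(abs_lt.1 (hy.2 S ⟨l, hlS⟩ hS2)).1]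
  · push Not at hm
    have hJ : lhsJ l x = 1 := by
      rw [lhsJ_eq_of_forall_lt hzero, sum_eq_zero fun i hi => ?_]
      · simp [x, hl]
      · have := (hval i (mem_Ioi.1 hi)).resolve_right (hm i (mem_Ioi.1 hi))
        simp [x, this]
    linarith [(abs_lt.1 (hy.1 l)).2]

lemma IsInteriorLB.eq_zero (hy : IsInteriorLB fun i => (y i : ℝ)) : y = 0 := by
  by_contra hy0
  obtain ⟨l, hl, hbelow⟩ := exists_ne_zero_forall_lt_eq_zero hy0
  wlog hl1 : y l = 1 generalizing y
  · have hneg : y l = -1 := by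
      have := hy.abs_le_one l
      rw [abs_le] at this
      omega
    exact this hy.intCast_neg (neg_ne_zero.2 hy0) (by simpa using hl) (by simpa using hbelow)
      (by simp [hneg])
  exact hy.ne_one_of_forall_lt_eq_zero hbelow hl1

end Integral

end

theorem stmt_12_general {n : ℕ} (y : Fin n → ℤ) :
    (∀ idx : LBIdx n, lbIneq idx (fun i => (y i : ℝ)) < 1) ↔ y = 0 := by
  rw [← isInteriorLB_iff_forall_lbIneq_lt_one]
  refine ⟨IsInteriorLB.eq_zero, ?_⟩
  rintro rfl
  simpa [← Pi.zero_def] using isInteriorLB_zero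

theorem stmt_12 {n : ℕ} (hn : 1 ≤ n) (y : Fin n → ℤ) :
    (∀ idx : LBIdx n, lbIneq idx (fun i => (y i : ℝ)) < 1) ↔ y = 0 :=
  stmt_12_general y
end

section
/- For every n ≥ 1 there exists a bounded polytope P ⊂ R^n with 2(2^n − 1) facet-defining inequalities such that P contains exactly one integer point in its interior, and the removal of any single defining inequality results in a polyhedron containing strictly more integer points in its interior. Consequently c(n,1) ≥ 2(2^n − 1). -/
/-!
The polytope has one pair of inequalities `±(∑_{j ∈ S} x_j - (2n)⁻¹ ∑_{j ∉ S} x_j) ≤ |S| - (4n)⁻¹`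
for every nonempty `S ⊆ {1, …, n}`; the rows for `S = {j}` and `S = univ` already confine `x_j` to
`[-3/2, 3/2]`. A nonzero integer point `z` violates the inequality for the sign `σ` of one of its
nonzero entries and `S = {j | σ z_j > 0}`, so `0` is the only integer point in the polytope, and it
lies in the interior. Conversely the integer point `σ 1_S` violates the `(σ, S)` inequality, while
any other row loses at least `(2n)⁻¹ > (4n)⁻¹` on it and so is satisfied strictly. Hence no
inequality can be dropped without gaining an integer point, and every subsystem with the same
integer points is the whole system.
-/

open Finset

section Polyhedron

variable {ι κ : Type*} [Fintype κ] (A : Matrix ι κ ℝ) (b : ι → ℝ)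

def ViolatesOnly (i₀ : ι) (y : κ → ℤ) : Prop :=
  (∀ i ≠ i₀, ∑ j, A i j * (y j : ℝ) < b i) ∧ b i₀ < ∑ j, A i₀ j * (y j : ℝ)

variable {A b}

lemma ssubset_of_violatesOnly {i₀ : ι} {y : κ → ℤ} (hy : ViolatesOnly A b i₀ y) :
    {y : κ → ℤ | ∀ i, ∑ j, A i j * (y j : ℝ) < b i} ⊂
      {y : κ → ℤ | ∀ i, i ≠ i₀ → ∑ j, A i j * (y j : ℝ) < b i} :=
  Set.ssubset_iff_of_subset (fun _ hz i _ => by exact hz i) |>.mpr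
    ⟨y, hy.1, fun hy' => (hy' i₀).not_gt hy.2⟩

lemma mem_of_violatesOnly {i₀ : ι} {y : κ → ℤ} (hy : ViolatesOnly A b i₀ y) {S : Finset ι}
    (hS : {y : κ → ℤ | ∀ i ∈ S, ∑ j, A i j * (y j : ℝ) ≤ b i} =
      {y : κ → ℤ | ∀ i, ∑ j, A i j * (y j : ℝ) ≤ b i}) :
    i₀ ∈ S := by
  by_contra hi₀
  have hyS : y ∈ {y : κ → ℤ | ∀ i ∈ S, ∑ j, A i j * (y j : ℝ) ≤ b i} :=
    fun i hi => (hy.1 i (ne_of_mem_of_not_mem hi hi₀)).le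
  rw [hS] at hyS
  exact (hyS i₀).not_gt hy.2

lemma setOf_forall_le_eq_zero (hb : ∀ i, 0 < b i)
    (hviol : ∀ z : κ → ℤ, z ≠ 0 → ∃ i, b i < ∑ j, A i j * (z j : ℝ)) :
    {y : κ → ℤ | ∀ i, ∑ j, A i j * (y j : ℝ) ≤ b i} = {0} := by
  ext z
  refine ⟨fun hz => by_contra fun hz0 => ?_, ?_⟩
  · obtain ⟨i, hi⟩ := hviol z hz0
    exact (hz i).not_gt hi
  · rintro rfl i
    simpa using (hb i).le

lemma setOf_forall_lt_eq_zero (hb : ∀ i, 0 < b i)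
    (hviol : ∀ z : κ → ℤ, z ≠ 0 → ∃ i, b i < ∑ j, A i j * (z j : ℝ)) :
    {y : κ → ℤ | ∀ i, ∑ j, A i j * (y j : ℝ) < b i} = {0} := by
  refine Set.Subset.antisymm ?_ (by rintro _ rfl i; simpa using hb i)
  rw [← setOf_forall_le_eq_zero hb hviol]
  exact fun z hz i => (hz i).le

end Polyhedron

namespace CutPolytope

variable {n : ℕ}

abbrev Row (n : ℕ) := ℤˣ × {S : Finset (Fin n) // S.Nonempty}

lemma card_row (n : ℕ) : Fintype.card (Row n) = 2 * (2 ^ n - 1) := by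
  simp [Fintype.card_subtype, nonempty_iff_ne_empty, filter_ne']

noncomputable def form (S : Finset (Fin n)) (x : Fin n → ℝ) : ℝ :=
  ∑ j ∈ S, x j - (2 * n : ℝ)⁻¹ * ∑ j ∈ Sᶜ, x j

noncomputable def coeff (r : Row n) (j : Fin n) : ℝ :=
  ((r.1 : ℤ) : ℝ) * if j ∈ r.2.1 then 1 else -(2 * n : ℝ)⁻¹

noncomputable def bound (r : Row n) : ℝ :=
  r.2.1.card - (4 * n : ℝ)⁻¹

def witness (r : Row n) (j : Fin n) : ℤ :=
  if j ∈ r.2.1 then r.1 else 0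

lemma sum_coeff_mul (r : Row n) (x : Fin n → ℝ) :
    ∑ j, coeff r j * x j = ((r.1 : ℤ) : ℝ) * form r.2.1 x := by
  simp [coeff, form, sum_ite, filter_notMem_eq_sdiff, ← compl_eq_univ_sdiff, mul_add, mul_neg,
    mul_sum, mul_assoc, sub_eq_add_neg]

lemma form_const_mul (c : ℝ) (S : Finset (Fin n)) (x : Fin n → ℝ) :
    form S (fun j => c * x j) = c * form S x := by
  simp only [form, ← mul_sum]
  ring

lemma form_indicator (T S : Finset (Fin n)) :
    form T (fun j => if j ∈ S then 1 else 0) = #(T ∩ S) - (2 * n : ℝ)⁻¹ * #(S \ T) := by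
  simp [form, sdiff_eq_inter_compl, inter_comm]

lemma sum_coeff_mul_witness (r r₀ : Row n) :
    ∑ j, coeff r j * (witness r₀ j : ℝ) =
      (((r.1 * r₀.1 : ℤˣ) : ℤ) : ℝ) * (#(r.2.1 ∩ r₀.2.1) - (2 * n : ℝ)⁻¹ * #(r₀.2.1 \ r.2.1)) := by
  have hw : (fun j => (witness r₀ j : ℝ)) =
      fun j => ((r₀.1 : ℤ) : ℝ) * if j ∈ r₀.2.1 then 1 else 0 := by
    ext j
    unfold witness
    split_ifs <;> simp
  rw [sum_coeff_mul, hw, form_const_mul, form_indicator]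
  push_cast
  ring

lemma inter_sub_lt_bound {T S : Finset (Fin n)} (hT : T.Nonempty) (hTS : T ≠ S) :
    #(T ∩ S) - (2 * n : ℝ)⁻¹ * #(S \ T) < #T - (4 * n : ℝ)⁻¹ := by
  have hn' : (1 : ℝ) ≤ n := by exact_mod_cast hT.choose.pos
  have hcard : (#T : ℝ) = #(T ∩ S) + #(T \ S) := by
    exact_mod_cast (card_inter_add_card_sdiff T S).symm
  have hδ : (4 * n : ℝ)⁻¹ < (2 * n : ℝ)⁻¹ := inv_strictAnti₀ (by positivity) (by linarith)
  by_cases hsub : T ⊆ S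
  · have hST : (1 : ℝ) ≤ #(S \ T) := by
      exact_mod_cast (sdiff_nonempty.mpr fun h => hTS (hsub.antisymm h)).card_pos
    have hδST : (2 * n : ℝ)⁻¹ ≤ (2 * n : ℝ)⁻¹ * #(S \ T) := le_mul_of_one_le_right (by positivity) hST
    simp only [hcard, sdiff_eq_empty_iff_subset.mpr hsub, card_empty, Nat.cast_zero]
    linarith
  · have hTS' : (1 : ℝ) ≤ #(T \ S) := by exact_mod_cast (sdiff_nonempty.mpr hsub).card_pos
    have hε : (4 * n : ℝ)⁻¹ < 1 := inv_lt_one_of_one_lt₀ (by linarith)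
    have hSd : (0 : ℝ) ≤ (2 * n : ℝ)⁻¹ * #(S \ T) := by positivity
    linarith

lemma neg_inter_sub_lt_bound {T : Finset (Fin n)} (hT : T.Nonempty) (S : Finset (Fin n)) :
    -(#(T ∩ S) - (2 * n : ℝ)⁻¹ * #(S \ T)) < #T - (4 * n : ℝ)⁻¹ := by
  have hn' : (1 : ℝ) ≤ n := by exact_mod_cast hT.choose.pos
  have hT' : (1 : ℝ) ≤ #T := by exact_mod_cast hT.card_pos
  have hSn : (#(S \ T) : ℝ) ≤ n := by exact_mod_cast (card_le_univ _).trans (Fintype.card_fin n).le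
  have hδn : (2 * n : ℝ)⁻¹ * #(S \ T) ≤ 1 / 2 := by
    calc (2 * n : ℝ)⁻¹ * #(S \ T) ≤ (2 * n : ℝ)⁻¹ * n := by gcongr
      _ = 1 / 2 := by field_simp
  have hε : (4 * n : ℝ)⁻¹ ≤ 1 / 4 := by rw [one_div]; exact inv_anti₀ (by norm_num) (by linarith)
  have : (0 : ℝ) ≤ #(T ∩ S) := by positivity
  linarith

lemma witness_lt_bound {r r₀ : Row n} (h : r ≠ r₀) :
    ∑ j, coeff r j * (witness r₀ j : ℝ) < bound r := by
  rw [sum_coeff_mul_witness, bound]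
  rcases Int.units_eq_one_or (r.1 * r₀.1) with h1 | h1
  · have hσ : r.1 = r₀.1 := by
      rw [← Int.units_inv_eq_self r₀.1]
      exact eq_inv_of_mul_eq_one_left h1
    have hS : r.2.1 ≠ r₀.2.1 := fun hS => h (Prod.ext hσ (Subtype.ext hS))
    simpa [h1] using inter_sub_lt_bound r.2.2 hS
  · simpa [h1] using neg_inter_sub_lt_bound r.2.2 r₀.2.1

lemma bound_pos (r : Row n) : 0 < bound r := by
  have hS : (1 : ℝ) ≤ #r.2.1 := by exact_mod_cast r.2.2.card_pos
  have hn : (1 : ℝ) ≤ n := by exact_mod_cast r.2.2.choose.pos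
  have : (4 * n : ℝ)⁻¹ < 1 := inv_lt_one_of_one_lt₀ (by linarith)
  rw [bound]
  linarith

lemma bound_lt_witness (r : Row n) : bound r < ∑ j, coeff r j * (witness r j : ℝ) := by
  rw [sum_coeff_mul_witness, Int.units_mul_self, bound]
  have : (0 : ℝ) < (4 * n : ℝ)⁻¹ := by have := r.2.2.choose.pos; positivity
  simpa using this

lemma form_univ (x : Fin n → ℝ) : form univ x = ∑ j, x j := by
  simp [form]

lemma form_singleton (j : Fin n) (x : Fin n → ℝ) :
    form {j} x = (1 + (2 * n : ℝ)⁻¹) * x j - (2 * n : ℝ)⁻¹ * ∑ i, x i := by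
  rw [form, ← sum_add_sum_compl {j} x, sum_singleton]
  ring

lemma card_le_form_posPart (w : Fin n → ℤ) :
    (#{j | 0 < w j} : ℝ) ≤ form {j | 0 < w j} (fun j => w j) := by
  set P : Finset (Fin n) := {j | 0 < w j}
  have hP : (#P : ℝ) ≤ ∑ j ∈ P, (w j : ℝ) := by
    rw [← nsmul_one]
    exact card_nsmul_le_sum _ _ _ fun j hj => by
      exact_mod_cast (mem_filter.mp hj).2
  have hPc : ∑ j ∈ Pᶜ, (w j : ℝ) ≤ 0 := sum_nonpos fun j hj => by
    have : w j ≤ 0 := not_lt.mp fun h => mem_compl.mp hj (mem_filter.mpr ⟨mem_univ j, h⟩)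
    exact_mod_cast this
  have : (0 : ℝ) ≤ (2 * n : ℝ)⁻¹ * -∑ j ∈ Pᶜ, (w j : ℝ) := by
    apply mul_nonneg (by positivity); linarith
  rw [form]
  linarith

lemma exists_bound_lt (z : Fin n → ℤ) (hz : z ≠ 0) :
    ∃ r : Row n, bound r < ∑ j, coeff r j * (z j : ℝ) := by
  obtain ⟨j, hj⟩ := Function.ne_iff.mp hz
  obtain ⟨σ, hσ⟩ : ∃ σ : ℤˣ, 0 < σ * z j := by
    rcases hj.lt_or_gt with h | h
    · exact ⟨-1, by simpa using h⟩
    · exact ⟨1, by simpa using h⟩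
  refine ⟨(σ, ⟨({i | 0 < σ * z i} : Finset _), j, by simpa using hσ⟩), ?_⟩
  have h := card_le_form_posPart fun i => σ * z i
  push_cast at h
  rw [sum_coeff_mul, ← form_const_mul, bound]
  have : (0 : ℝ) < (4 * n : ℝ)⁻¹ := by have := j.pos; positivity
  linarith

section Bounded

variable {x : Fin n → ℝ} (hx : ∀ r : Row n, ∑ j, coeff r j * x j ≤ bound r)
include hx

lemma abs_form_le {S : Finset (Fin n)} (hS : S.Nonempty) : |form S x| ≤ #S := by
  have h := fun σ : ℤˣ => hx (σ, ⟨S, hS⟩)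
  simp only [sum_coeff_mul, bound] at h
  have h₁ := h 1
  have h₂ := h (-1)
  have : (0 : ℝ) ≤ (4 * n : ℝ)⁻¹ := by positivity
  push_cast at h₁ h₂
  rw [abs_le]
  constructor <;> linarith

lemma abs_le_of_forall_le_bound (j : Fin n) : |x j| ≤ 3 / 2 := by
  have h₁ := abs_form_le hx (singleton_nonempty j)
  have h₂ := abs_form_le hx (S := univ) ⟨j, mem_univ _⟩
  rw [form_singleton, card_singleton, Nat.cast_one] at h₁
  rw [form_univ, card_univ, Fintype.card_fin] at h₂
  set δ := (2 * n : ℝ)⁻¹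
  have hn : (0 : ℝ) < n := by exact_mod_cast j.pos
  have hδ : 0 < δ := by positivity
  have hδn : δ * n = 1 / 2 := by
    simp only [δ]
    field_simp
  have hs : δ * |∑ i, x i| ≤ 1 / 2 := hδn ▸ mul_le_mul_of_nonneg_left h₂ hδ.le
  calc |x j| ≤ (1 + δ) * |x j| := le_mul_of_one_le_left (abs_nonneg _) (by linarith)
    _ = |((1 + δ) * x j - δ * ∑ i, x i) + δ * ∑ i, x i| := by
      rw [sub_add_cancel, abs_mul, abs_of_pos (by linarith : 0 < 1 + δ)]
    _ ≤ |(1 + δ) * x j - δ * ∑ i, x i| + |δ * ∑ i, x i| := abs_add_le _ _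
    _ ≤ 3 / 2 := by rw [abs_mul, abs_of_pos hδ]; linarith

end Bounded

lemma isBounded_setOf_forall_le_bound :
    Bornology.IsBounded {x : Fin n → ℝ | ∀ r : Row n, ∑ j, coeff r j * x j ≤ bound r} := by
  refine (Metric.isBounded_closedBall (x := 0) (r := 3 / 2)).subset fun x hx => ?_
  rw [mem_closedBall_zero_iff, pi_norm_le_iff_of_nonneg (by norm_num)]
  exact fun j => abs_le_of_forall_le_bound hx j

noncomputable def rowEquiv (n : ℕ) : Fin (2 * (2 ^ n - 1)) ≃ Row n :=
  (Fintype.equivFinOfCardEq (card_row n)).symm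

noncomputable def cutMatrix (n : ℕ) : Matrix (Fin (2 * (2 ^ n - 1))) (Fin n) ℝ :=
  Matrix.of fun i => coeff (rowEquiv n i)

noncomputable def cutBound (n : ℕ) (i : Fin (2 * (2 ^ n - 1))) : ℝ :=
  bound (rowEquiv n i)

lemma cutBound_pos (i : Fin (2 * (2 ^ n - 1))) : 0 < cutBound n i :=
  bound_pos _

lemma exists_cutBound_lt (z : Fin n → ℤ) (hz : z ≠ 0) :
    ∃ i, cutBound n i < ∑ j, cutMatrix n i j * (z j : ℝ) := by
  obtain ⟨r, hr⟩ := exists_bound_lt z hz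
  exact ⟨(rowEquiv n).symm r, by simpa [cutMatrix, cutBound] using hr⟩

lemma isBounded_cutPolytope :
    Bornology.IsBounded {x : Fin n → ℝ | ∀ i, ∑ j, cutMatrix n i j * x j ≤ cutBound n i} := by
  convert isBounded_setOf_forall_le_bound (n := n) using 3 with x
  exact (rowEquiv n).forall_congr_right (q := fun r => ∑ j, coeff r j * x j ≤ bound r)

lemma violatesOnly_cutMatrix (i₀ : Fin (2 * (2 ^ n - 1))) :
    ViolatesOnly (cutMatrix n) (cutBound n) i₀ (witness (rowEquiv n i₀)) :=
  ⟨fun _ hi => witness_lt_bound ((rowEquiv n).injective.ne hi), bound_lt_witness _⟩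

end CutPolytope

theorem stmt_13_general {n : ℕ} :
    (∃ (m : ℕ) (A : Matrix (Fin m) (Fin n) ℝ) (b : Fin m → ℝ),
      m = 2 * (2 ^ n - 1) ∧
      Bornology.IsBounded {x : Fin n → ℝ | ∀ i, ∑ j, A i j * x j ≤ b i} ∧
      Set.ncard {y : Fin n → ℤ | ∀ i, ∑ j, A i j * (y j : ℝ) < b i} = 1 ∧
      ∀ i₀ : Fin m,
        {y : Fin n → ℤ | ∀ i, ∑ j, A i j * (y j : ℝ) < b i} ⊂
          {y : Fin n → ℤ | ∀ i, i ≠ i₀ → ∑ j, A i j * (y j : ℝ) < b i}) ∧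
    ∀ c : ℕ,
      (∀ (m : ℕ) (A : Matrix (Fin m) (Fin n) ℝ) (b : Fin m → ℝ),
        Bornology.IsBounded {x : Fin n → ℝ | ∀ i, ∑ j, A i j * x j ≤ b i} →
        Set.ncard {y : Fin n → ℤ | ∀ i, ∑ j, A i j * (y j : ℝ) ≤ b i} = 1 →
        ∃ S : Finset (Fin m), S.card ≤ c ∧
          {y : Fin n → ℤ | ∀ i ∈ S, ∑ j, A i j * (y j : ℝ) ≤ b i} =
            {y : Fin n → ℤ | ∀ i, ∑ j, A i j * (y j : ℝ) ≤ b i}) →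
      2 * (2 ^ n - 1) ≤ c := by
  open CutPolytope in
  refine ⟨⟨_, cutMatrix n, cutBound n, rfl, isBounded_cutPolytope, ?_,
    fun i₀ => ssubset_of_violatesOnly (violatesOnly_cutMatrix i₀)⟩, fun c hc => ?_⟩
  · rw [setOf_forall_lt_eq_zero cutBound_pos exists_cutBound_lt, Set.ncard_singleton]
  · obtain ⟨S, hSc, hS⟩ := hc _ (cutMatrix n) (cutBound n) isBounded_cutPolytope
      (by rw [setOf_forall_le_eq_zero cutBound_pos exists_cutBound_lt, Set.ncard_singleton])
    have hS_univ : S = univ :=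
      eq_univ_of_forall fun i₀ => mem_of_violatesOnly (violatesOnly_cutMatrix i₀) hS
    simpa [hS_univ] using hSc

theorem stmt_13 {n : ℕ} (hn : 1 ≤ n) :
    (∃ (m : ℕ) (A : Matrix (Fin m) (Fin n) ℝ) (b : Fin m → ℝ),
      m = 2 * (2 ^ n - 1) ∧
      Bornology.IsBounded {x : Fin n → ℝ | ∀ i, ∑ j, A i j * x j ≤ b i} ∧
      Set.ncard {y : Fin n → ℤ | ∀ i, ∑ j, A i j * (y j : ℝ) < b i} = 1 ∧
      ∀ i₀ : Fin m,
        {y : Fin n → ℤ | ∀ i, ∑ j, A i j * (y j : ℝ) < b i} ⊂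
          {y : Fin n → ℤ | ∀ i, i ≠ i₀ → ∑ j, A i j * (y j : ℝ) < b i}) ∧
    ∀ c : ℕ,
      (∀ (m : ℕ) (A : Matrix (Fin m) (Fin n) ℝ) (b : Fin m → ℝ),
        Bornology.IsBounded {x : Fin n → ℝ | ∀ i, ∑ j, A i j * x j ≤ b i} →
        Set.ncard {y : Fin n → ℤ | ∀ i, ∑ j, A i j * (y j : ℝ) ≤ b i} = 1 →
        ∃ S : Finset (Fin m), S.card ≤ c ∧
          {y : Fin n → ℤ | ∀ i ∈ S, ∑ j, A i j * (y j : ℝ) ≤ b i} =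
            {y : Fin n → ℤ | ∀ i, ∑ j, A i j * (y j : ℝ) ≤ b i}) →
      2 * (2 ^ n - 1) ≤ c :=
  stmt_13_general
end

section
/- Let (X_i)_{i∈Λ} be a (possibly infinite) collection of convex sets in R^n, with at least one X_r bounded, such that ∩_{i∈Λ} X_i contains exactly k integer points. Then there is a finite subcollection whose intersection contains exactly the same k integer points and no others. -/
theorem stmt_15 {n k : ℕ} {Λ : Type*} (X : Λ → Set (Fin n → ℝ))
    (hconv : ∀ i, Convex ℝ (X i))
    (r : Λ) (hbd : Bornology.IsBounded (X r))
    (hk : Set.ncard {y : Fin n → ℤ | (fun j => (y j : ℝ)) ∈ ⋂ i, X i} = k) :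
    ∃ I : Finset Λ,
      {y : Fin n → ℤ | (fun j => (y j : ℝ)) ∈ ⋂ i ∈ I, X i} =
        {y : Fin n → ℤ | (fun j => (y j : ℝ)) ∈ ⋂ i, X i} := by
  classical
  obtain ⟨R, hR⟩ := hbd.exists_norm_le
  -- integer points in X r are finite
  have hF : Set.Finite {y : Fin n → ℤ | (fun j => (y j : ℝ)) ∈ X r} := by
    apply Set.Finite.subset (Set.Finite.pi (fun j : Fin n => Set.finite_Icc (⌈-R⌉) ⌊R⌋))
    intro y hy
    intro j _
    have h1 : ‖(fun j => (y j : ℝ))‖ ≤ R := hR _ hy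
    have h2 : ‖(y j : ℝ)‖ ≤ R := le_trans (norm_le_pi_norm (fun j => (y j : ℝ)) j) h1
    rw [Real.norm_eq_abs, abs_le] at h2
    constructor
    · exact Int.ceil_le.mpr (by exact_mod_cast h2.1)
    · exact Int.le_floor.mpr (by exact_mod_cast h2.2)
  set B := {y : Fin n → ℤ | (fun j => (y j : ℝ)) ∈ X r ∧ ¬ (fun j => (y j : ℝ)) ∈ ⋂ i, X i}
    with hB
  have hBfin : B.Finite := hF.subset (fun y hy => hy.1)
  have hchoice : ∀ y ∈ B, ∃ i, (fun j => (y j : ℝ)) ∉ X i := by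
    intro y hy
    by_contra h
    push_neg at h
    exact hy.2 (Set.mem_iInter.mpr h)
  choose f hf using hchoice
  refine ⟨insert r (hBfin.toFinset.attach.image (fun y => f y.1 (hBfin.mem_toFinset.mp y.2))), ?_⟩
  ext y
  simp only [Set.mem_setOf_eq, Set.mem_iInter]
  constructor
  · intro h
    have hyr : (fun j => (y j : ℝ)) ∈ X r := h r (Finset.mem_insert_self _ _)
    intro i
    by_contra hnot
    have hyB : y ∈ B := ⟨hyr, fun hmem => hnot (Set.mem_iInter.mp hmem i)⟩
    have : f y hyB ∈ insert r (hBfin.toFinset.attach.image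
        (fun y => f y.1 (hBfin.mem_toFinset.mp y.2))) := by
      apply Finset.mem_insert_of_mem
      exact Finset.mem_image.mpr ⟨⟨y, hBfin.mem_toFinset.mpr hyB⟩, Finset.mem_attach _ _, rfl⟩
    exact hf y hyB (h _ this)
  · intro h i _
    exact h i
end
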